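/- arXiv:2311.08611 — 14 statements merged into one kernel-verified Lean document; each statement's English description precedes it below -/
import Mathlib

section
/- Let α, c, μ, γ, p, ε, a, m, d, q be positive real constants. If (S, I, C, M, R) : ℝ → ℝ^5 is a solution of the SICMR system S' = α − cSI − μS, I' = cSI − pCI/(ε + I + aM) − γI − μI, C' = pCI/(ε + I + aM) − mC − dC − μC, M' = mC − qM − μM, R' = qM + γI − μR on [0, ∞) whose initial value lies in Ω = {(S, I, C, M, R) ∈ ℝ₊^5 : S + I + C + M + R ≤ α/μ}, then the solution remains in Ω for all t ≥ 0; that is, Ω is positively invariant for the SICMR system. -/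
/-!
Each component `x` satisfies a linear equation `x' = f - λ x` with `f ≥ 0`, where `f` and `λ`
are built from the other components and are continuous wherever `ε + I + a M ≠ 0`; then
`exp (∫ λ) * x` is nondecreasing, so `x` cannot become negative. At a time where the state is
nonnegative the denominator is at least `ε > 0`, so nonnegativity propagates to the right, and a
continuous induction from `t = 0` gives it for all `t ≥ 0`. The gap `α / μ - N` to the total
population satisfies `(α / μ - N)' = d C - μ (α / μ - N)`, an equation of the same kind.
-/

open Set Filter Topology

theorem nonneg_on_Icc_of_hasDerivAt_sub_mul {x f lam : ℝ → ℝ} {T b : ℝ}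
    (hlam : ContinuousOn lam (Icc T b)) (hf : ∀ t ∈ Icc T b, 0 ≤ f t)
    (hx : ∀ t ∈ Icc T b, HasDerivAt x (f t - lam t * x t) t) (hxT : 0 ≤ x T) :
    ∀ t ∈ Icc T b, 0 ≤ x t := by
  intro t ht
  have hTb : T ≤ b := ht.1.trans ht.2
  set lamExt : ℝ → ℝ := IccExtend hTb ((Icc T b).domRestrict lam)
  have hlamExt : Continuous lamExt := hlam.domRestrict.Icc_extend'
  have hext : ∀ t ∈ Icc T b, lamExt t = lam t := fun t ht => IccExtend_of_mem _ _ ht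
  set Λ : ℝ → ℝ := fun t => ∫ s in T..t, lamExt s
  have hg : ∀ t ∈ Icc T b, HasDerivAt (fun t => Real.exp (Λ t) * x t)
      (Real.exp (Λ t) * f t) t := by
    intro t ht
    refine ((hlamExt.integral_hasStrictDerivAt T t).hasDerivAt.exp.mul (hx t ht)).congr_deriv ?_
    rw [hext t ht]
    ring
  have hmono : MonotoneOn (fun t => Real.exp (Λ t) * x t) (Icc T b) :=
    monotoneOn_of_hasDerivWithinAt_nonneg (convex_Icc T b) (HasDerivAt.continuousOn hg)
      (fun t ht => (hg t (interior_subset ht)).hasDerivWithinAt)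
      (fun t ht => mul_nonneg (Real.exp_pos _).le (hf t (interior_subset ht)))
  have : Real.exp (Λ T) * x T ≤ Real.exp (Λ t) * x t :=
    hmono (left_mem_Icc.2 hTb) ht ht.1
  exact nonneg_of_mul_nonneg_right (le_trans (mul_nonneg (Real.exp_pos _).le hxT) this)
    (Real.exp_pos _)

theorem sicmr_nonneg_on_Icc {α c μ γ p ε a m d q : ℝ}
    (hα : 0 ≤ α) (hγ : 0 ≤ γ) (hm : 0 ≤ m) (hq : 0 ≤ q) {S I C M R : ℝ → ℝ} {T b : ℝ}
    (hS : ∀ t ∈ Icc T b, HasDerivAt S (α - c * S t * I t - μ * S t) t)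
    (hI : ∀ t ∈ Icc T b, HasDerivAt I
      (c * S t * I t - p * C t * I t / (ε + I t + a * M t) - γ * I t - μ * I t) t)
    (hC : ∀ t ∈ Icc T b, HasDerivAt C
      (p * C t * I t / (ε + I t + a * M t) - m * C t - d * C t - μ * C t) t)
    (hM : ∀ t ∈ Icc T b, HasDerivAt M (m * C t - q * M t - μ * M t) t)
    (hR : ∀ t ∈ Icc T b, HasDerivAt R (q * M t + γ * I t - μ * R t) t)
    (hden : ∀ t ∈ Icc T b, ε + I t + a * M t ≠ 0)
    (hT : 0 ≤ S T ∧ 0 ≤ I T ∧ 0 ≤ C T ∧ 0 ≤ M T ∧ 0 ≤ R T) :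
    ∀ t ∈ Icc T b, 0 ≤ S t ∧ 0 ≤ I t ∧ 0 ≤ C t ∧ 0 ≤ M t ∧ 0 ≤ R t := by
  obtain ⟨hST, hIT, hCT, hMT, hRT⟩ := hT
  have hScont := HasDerivAt.continuousOn hS
  have hIcont := HasDerivAt.continuousOn hI
  have hCcont := HasDerivAt.continuousOn hC
  have hMcont := HasDerivAt.continuousOn hM
  have hSnn := nonneg_on_Icc_of_hasDerivAt_sub_mul (lam := fun t => c * I t + μ)
    (by fun_prop) (fun _ _ => hα) (fun t ht => (hS t ht).congr_deriv (by ring)) hST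
  have hInn := nonneg_on_Icc_of_hasDerivAt_sub_mul (f := fun _ => 0)
    (lam := fun t => p * C t / (ε + I t + a * M t) + γ + μ - c * S t)
    (by fun_prop (disch := exact hden))
    (fun _ _ => le_rfl) (fun t ht => (hI t ht).congr_deriv (by ring))
    hIT
  have hCnn := nonneg_on_Icc_of_hasDerivAt_sub_mul (f := fun _ => 0)
    (lam := fun t => m + d + μ - p * I t / (ε + I t + a * M t))
    (by fun_prop (disch := exact hden))
    (fun _ _ => le_rfl) (fun t ht => (hC t ht).congr_deriv (by ring))
    hCT
  have hMnn := nonneg_on_Icc_of_hasDerivAt_sub_mul (lam := fun _ => q + μ) continuousOn_const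
    (fun t ht => mul_nonneg hm (hCnn t ht)) (fun t ht => (hM t ht).congr_deriv (by ring)) hMT
  have hRnn := nonneg_on_Icc_of_hasDerivAt_sub_mul (lam := fun _ => μ) continuousOn_const
    (fun t ht => add_nonneg (mul_nonneg hq (hMnn t ht)) (mul_nonneg hγ (hInn t ht))) hR hRT
  exact fun t ht => ⟨hSnn t ht, hInn t ht, hCnn t ht, hMnn t ht, hRnn t ht⟩

theorem sicmr_nonneg {α c μ γ p ε a m d q : ℝ}
    (hα : 0 ≤ α) (hγ : 0 ≤ γ) (hε : 0 < ε) (ha : 0 ≤ a) (hm : 0 ≤ m) (hq : 0 ≤ q)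
    {S I C M R : ℝ → ℝ}
    (hS : ∀ t, 0 ≤ t → HasDerivAt S (α - c * S t * I t - μ * S t) t)
    (hI : ∀ t, 0 ≤ t → HasDerivAt I
      (c * S t * I t - p * C t * I t / (ε + I t + a * M t) - γ * I t - μ * I t) t)
    (hC : ∀ t, 0 ≤ t → HasDerivAt C
      (p * C t * I t / (ε + I t + a * M t) - m * C t - d * C t - μ * C t) t)
    (hM : ∀ t, 0 ≤ t → HasDerivAt M (m * C t - q * M t - μ * M t) t)
    (hR : ∀ t, 0 ≤ t → HasDerivAt R (q * M t + γ * I t - μ * R t) t)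
    (h0 : 0 ≤ S 0 ∧ 0 ≤ I 0 ∧ 0 ≤ C 0 ∧ 0 ≤ M 0 ∧ 0 ≤ R 0) :
    ∀ t, 0 ≤ t → 0 ≤ S t ∧ 0 ≤ I t ∧ 0 ≤ C t ∧ 0 ≤ M t ∧ 0 ≤ R t := by
  intro t ht
  set P : Set ℝ := {t | 0 ≤ S t ∧ 0 ≤ I t ∧ 0 ≤ C t ∧ 0 ≤ M t ∧ 0 ≤ R t}
  have hPclosed : IsClosed (P ∩ Icc 0 t) := by
    have hcont : ContinuousOn (fun r => (S r, I r, C r, M r, R r)) (Icc 0 t) := by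
      have := HasDerivAt.continuousOn fun r (hr : r ∈ Icc 0 t) => hS r hr.1
      have := HasDerivAt.continuousOn fun r (hr : r ∈ Icc 0 t) => hI r hr.1
      have := HasDerivAt.continuousOn fun r (hr : r ∈ Icc 0 t) => hC r hr.1
      have := HasDerivAt.continuousOn fun r (hr : r ∈ Icc 0 t) => hM r hr.1
      have := HasDerivAt.continuousOn fun r (hr : r ∈ Icc 0 t) => hR r hr.1
      fun_prop
    rw [inter_comm]
    exact hcont.preimage_isClosed_of_isClosed isClosed_Icc (isClosed_Ici (a := 0))
  refine hPclosed.Icc_subset_of_forall_mem_nhdsWithin h0 ?_ ⟨ht, le_rfl⟩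
  rintro s ⟨hPs, hs, -⟩
  have hden : ∀ᶠ r in 𝓝[≥] s, 0 < ε + I r + a * M r := by
    have hpos : 0 < ε + I s + a * M s := by nlinarith [hPs.2.1, hPs.2.2.2.1]
    have hcont : ContinuousAt (fun r => ε + I r + a * M r) s :=
      (continuousAt_const.add (hI s hs).continuousAt).add
        (continuousAt_const.mul (hM s hs).continuousAt)
    exact (hcont.eventually (lt_mem_nhds hpos)).filter_mono nhdsWithin_le_nhds
  obtain ⟨u, hsu, hu⟩ := mem_nhdsGE_iff_exists_Icc_subset.1 hden
  have hsr : ∀ r ∈ Icc s u, 0 ≤ r := fun r hr => hs.trans hr.1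
  exact mem_of_superset (Icc_mem_nhdsGT hsu) <| sicmr_nonneg_on_Icc hα hγ hm hq
    (fun r hr => hS r (hsr r hr)) (fun r hr => hI r (hsr r hr)) (fun r hr => hC r (hsr r hr))
    (fun r hr => hM r (hsr r hr)) (fun r hr => hR r (hsr r hr)) (fun r hr => (hu hr).ne') hPs

theorem sicmr_total_le {α c μ γ p ε a m d q : ℝ} (hμ : μ ≠ 0) (hd : 0 ≤ d)
    {S I C M R : ℝ → ℝ}
    (hS : ∀ t, 0 ≤ t → HasDerivAt S (α - c * S t * I t - μ * S t) t)
    (hI : ∀ t, 0 ≤ t → HasDerivAt I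
      (c * S t * I t - p * C t * I t / (ε + I t + a * M t) - γ * I t - μ * I t) t)
    (hC : ∀ t, 0 ≤ t → HasDerivAt C
      (p * C t * I t / (ε + I t + a * M t) - m * C t - d * C t - μ * C t) t)
    (hM : ∀ t, 0 ≤ t → HasDerivAt M (m * C t - q * M t - μ * M t) t)
    (hR : ∀ t, 0 ≤ t → HasDerivAt R (q * M t + γ * I t - μ * R t) t)
    (hC_nonneg : ∀ t, 0 ≤ t → 0 ≤ C t) (h0 : S 0 + I 0 + C 0 + M 0 + R 0 ≤ α / μ) :
    ∀ t, 0 ≤ t → S t + I t + C t + M t + R t ≤ α / μ := by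
  intro t ht
  have hgap : ∀ r ∈ Icc 0 t, HasDerivAt (fun r => α / μ - (S r + I r + C r + M r + R r))
      (d * C r - μ * (α / μ - (S r + I r + C r + M r + R r))) r := by
    intro r hr
    refine (((((hS r hr.1).add (hI r hr.1)).add (hC r hr.1)).add (hM r hr.1)).add
      (hR r hr.1)).const_sub (α / μ) |>.congr_deriv ?_
    field_simp
    ring
  have := nonneg_on_Icc_of_hasDerivAt_sub_mul continuousOn_const
    (fun r hr => mul_nonneg hd (hC_nonneg r hr.1)) hgap (by linarith) t ⟨ht, le_rfl⟩
  linarith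

theorem sicmr_omega_positively_invariant_general
    (α c μ γ p ε a m d q : ℝ)
    (hα : 0 < α) (hμ : 0 < μ) (hγ : 0 < γ)
    (hε : 0 < ε) (ha : 0 < a) (hm : 0 < m) (hd : 0 < d) (hq : 0 < q)
    (S I C M R : ℝ → ℝ)
    (hS : ∀ t, 0 ≤ t → HasDerivAt S (α - c * S t * I t - μ * S t) t)
    (hI : ∀ t, 0 ≤ t → HasDerivAt I
      (c * S t * I t - p * C t * I t / (ε + I t + a * M t) - γ * I t - μ * I t) t)
    (hC : ∀ t, 0 ≤ t → HasDerivAt C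
      (p * C t * I t / (ε + I t + a * M t) - m * C t - d * C t - μ * C t) t)
    (hM : ∀ t, 0 ≤ t → HasDerivAt M (m * C t - q * M t - μ * M t) t)
    (hR : ∀ t, 0 ≤ t → HasDerivAt R (q * M t + γ * I t - μ * R t) t)
    (h0 : 0 ≤ S 0 ∧ 0 ≤ I 0 ∧ 0 ≤ C 0 ∧ 0 ≤ M 0 ∧ 0 ≤ R 0 ∧
      S 0 + I 0 + C 0 + M 0 + R 0 ≤ α / μ) :
    ∀ t, 0 ≤ t → 0 ≤ S t ∧ 0 ≤ I t ∧ 0 ≤ C t ∧ 0 ≤ M t ∧ 0 ≤ R t ∧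
      S t + I t + C t + M t + R t ≤ α / μ := by
  obtain ⟨hS0, hI0, hC0, hM0, hR0, hN0⟩ := h0
  have hnonneg := sicmr_nonneg hα.le hγ.le hε ha.le hm.le hq.le hS hI hC hM hR
    ⟨hS0, hI0, hC0, hM0, hR0⟩
  have htotal := sicmr_total_le hμ.ne' hd.le hS hI hC hM hR
    (fun t ht => (hnonneg t ht).2.2.1) hN0
  intro t ht
  obtain ⟨hSt, hIt, hCt, hMt, hRt⟩ := hnonneg t ht
  exact ⟨hSt, hIt, hCt, hMt, hRt, htotal t ht⟩

/-- The region
`Ω = {(S,I,C,M,R) ∈ ℝ₊⁵ : S + I + C + M + R ≤ α/μ}` is positively invariant for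
the SICMR system: any solution on `[0,∞)` whose initial value lies in `Ω`
remains in `Ω` for all `t ≥ 0`. -/
theorem sicmr_omega_positively_invariant
    (α c μ γ p ε a m d q : ℝ)
    (hα : 0 < α) (hc : 0 < c) (hμ : 0 < μ) (hγ : 0 < γ) (hp : 0 < p)
    (hε : 0 < ε) (ha : 0 < a) (hm : 0 < m) (hd : 0 < d) (hq : 0 < q)
    (S I C M R : ℝ → ℝ)
    (hS : ∀ t, 0 ≤ t → HasDerivAt S (α - c * S t * I t - μ * S t) t)
    (hI : ∀ t, 0 ≤ t → HasDerivAt I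
      (c * S t * I t - p * C t * I t / (ε + I t + a * M t) - γ * I t - μ * I t) t)
    (hC : ∀ t, 0 ≤ t → HasDerivAt C
      (p * C t * I t / (ε + I t + a * M t) - m * C t - d * C t - μ * C t) t)
    (hM : ∀ t, 0 ≤ t → HasDerivAt M (m * C t - q * M t - μ * M t) t)
    (hR : ∀ t, 0 ≤ t → HasDerivAt R (q * M t + γ * I t - μ * R t) t)
    (h0 : 0 ≤ S 0 ∧ 0 ≤ I 0 ∧ 0 ≤ C 0 ∧ 0 ≤ M 0 ∧ 0 ≤ R 0 ∧
      S 0 + I 0 + C 0 + M 0 + R 0 ≤ α / μ) :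
    ∀ t, 0 ≤ t → 0 ≤ S t ∧ 0 ≤ I t ∧ 0 ≤ C t ∧ 0 ≤ M t ∧ 0 ≤ R t ∧
      S t + I t + C t + M t + R t ≤ α / μ :=
  sicmr_omega_positively_invariant_general α c μ γ p ε a m d q hα hμ hγ hε ha hm hd hq S I C M R hS
    hI hC hM hR h0
end

section
/- Let α, c, μ, γ, p, m, d, q be positive real constants and let F and V be the 3×3 real matrices F = [[cα/μ, 0, 0], [0, 0, 0], [0, m, 0]] and V = diag(μ+γ, m+d+μ, q+μ). Then F·V⁻¹ = [[cα/(μ(μ+γ)), 0, 0], [0, 0, 0], [0, m/(m+d+μ), 0]], and the spectral radius of F·V⁻¹ equals cα/(μ(μ+γ)). -/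
/-! The next-generation matrix `F V⁻¹` is lower triangular, so its eigenvalues are its diagonal
entries `cα/(μ(μ+γ))`, `0`, `0`, and its spectral radius is the first of them. -/

namespace Matrix

variable {n K : Type*} [Fintype n]

theorem inv_diagonal_of_ne_zero [DecidableEq n] [Field K] {v : n → K} (hv : ∀ i, v i ≠ 0) :
    (diagonal v)⁻¹ = diagonal v⁻¹ :=
  inv_eq_right_inv <| by
    rw [diagonal_mul_diagonal, ← diagonal_one]
    exact congrArg diagonal (funext fun i => mul_inv_cancel₀ (hv i))

theorem spectrum_eq_range_diag_of_isLowerTriangular [Field K] [LinearOrder n]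
    {M : Matrix n n K} (hM : M.IsLowerTriangular) : spectrum K M = Set.range M.diag := by
  have hMt : Mᵀ.IsUpperTriangular := hM.transpose
  ext k
  rw [mem_spectrum_iff_isRoot_charpoly, ← charpoly_transpose,
    charpoly_of_isUpperTriangular _ hMt]
  simp [Polynomial.eval_prod, Finset.prod_eq_zero_iff, sub_eq_zero, eq_comm (a := k)]

theorem spectralRadius_eq_iSup_diag_of_isLowerTriangular [NormedField K] [LinearOrder n]
    {M : Matrix n n K} (hM : M.IsLowerTriangular) :
    spectralRadius K M = ⨆ i, (‖M i i‖₊ : ENNReal) := by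
  rw [spectralRadius, spectrum_eq_range_diag_of_isLowerTriangular hM, iSup_range]
  rfl

theorem spectralRadius_fin_three_lower [NormedField K] (r s : K) :
    spectralRadius K !![r, 0, 0; 0, 0, 0; 0, s, 0] = ‖r‖₊ := by
  have hlower : (!![r, 0, 0; 0, 0, 0; 0, s, 0] : Matrix (Fin 3) (Fin 3) K).IsLowerTriangular := by
    intro i j hij
    rw [OrderDual.toDual_lt_toDual] at hij
    fin_cases i <;> fin_cases j <;> simp_all
  rw [spectralRadius_eq_iSup_diag_of_isLowerTriangular hlower, iSup_fin_three]
  simp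

end Matrix

open Matrix

theorem sicmr_next_generation_matrix_and_R0_general
    (α c μ γ m d q : ℝ)
    (hα : 0 < α) (hc : 0 < c) (hμ : 0 < μ) (hγ : 0 < γ)
    (hm : 0 < m) (hd : 0 < d) (hq : 0 < q)
    (F V : Matrix (Fin 3) (Fin 3) ℝ)
    (hF : F = !![c * α / μ, 0, 0; 0, 0, 0; 0, m, 0])
    (hV : V = !![μ + γ, 0, 0; 0, m + d + μ, 0; 0, 0, q + μ]) :
    F * V⁻¹ = !![c * α / (μ * (μ + γ)), 0, 0; 0, 0, 0; 0, m / (m + d + μ), 0] ∧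
    spectralRadius ℝ (F * V⁻¹) = ENNReal.ofReal (c * α / (μ * (μ + γ))) := by
  have hVinv : V⁻¹ = !![(μ + γ)⁻¹, 0, 0; 0, (m + d + μ)⁻¹, 0; 0, 0, (q + μ)⁻¹] := by
    rw [hV, ← diagonal_vec3, inv_diagonal_of_ne_zero, diagonal_fin_three]
    · simp
    · intro i
      fin_cases i <;> simp <;> positivity
  have hFV : F * V⁻¹ = !![c * α / (μ * (μ + γ)), 0, 0; 0, 0, 0; 0, m / (m + d + μ), 0] := by
    rw [hF, hVinv, mul_fin_three]
    simp [div_div, ← div_eq_mul_inv]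
  refine ⟨hFV, ?_⟩
  rw [hFV, spectralRadius_fin_three_lower, ← Real.enorm_eq_ofReal (by positivity)]
  rfl

/-- For the SICMR model, with the new-infection matrix `F` and
transition matrix `V` at the disease-free equilibrium, the next-generation
matrix is `F * V⁻¹` as displayed, and its spectral radius (the basic
reproduction number) equals `cα/(μ(μ+γ))`. -/
theorem sicmr_next_generation_matrix_and_R0
    (α c μ γ p m d q : ℝ)
    (hα : 0 < α) (hc : 0 < c) (hμ : 0 < μ) (hγ : 0 < γ) (hp : 0 < p)
    (hm : 0 < m) (hd : 0 < d) (hq : 0 < q)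
    (F V : Matrix (Fin 3) (Fin 3) ℝ)
    (hF : F = !![c * α / μ, 0, 0; 0, 0, 0; 0, m, 0])
    (hV : V = !![μ + γ, 0, 0; 0, m + d + μ, 0; 0, 0, q + μ]) :
    F * V⁻¹ = !![c * α / (μ * (μ + γ)), 0, 0; 0, 0, 0; 0, m / (m + d + μ), 0] ∧
    spectralRadius ℝ (F * V⁻¹) = ENNReal.ofReal (c * α / (μ * (μ + γ))) :=
  sicmr_next_generation_matrix_and_R0_general α c μ γ m d q hα hc hμ hγ hm hd hq F V hF hV
end

section
/- Let α, c, μ, γ, p, ε, a, m, d, q be positive real constants and set ℛ₀ = cα/(μ(μ+γ)). If ℛ₀ > 1, then the point E₁ = ((μ+γ)/c, (μ/c)(ℛ₀ − 1), 0, 0, (γ/c)(ℛ₀ − 1)) is an equilibrium of the SICMR system, and it is the unique equilibrium with I > 0 and M = 0 (and C = 0). Conversely, if ℛ₀ ≤ 1, no equilibrium with I > 0 and C = M = 0 exists. -/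
/-!
With `C = M = 0` the system reduces to the SIR equilibrium equations. There `I ≠ 0` forces
`c S = μ + γ`, after which `I` and `R` are determined by linear equations, and the resulting
value `I = (μ / c)(ℛ₀ - 1)` is positive exactly when `ℛ₀ > 1`.
-/

/-- A point `(S, I, C, M, R)` is an equilibrium of the SICMR system iff all five
right-hand sides vanish. -/
def sicmrEquilibrium (α c μ γ p ε a m d q S I C M R : ℝ) : Prop :=
  α - c * S * I - μ * S = 0 ∧
  c * S * I - p * C * I / (ε + I + a * M) - γ * I - μ * I = 0 ∧
  p * C * I / (ε + I + a * M) - (m + d + μ) * C = 0 ∧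
  m * C - (q + μ) * M = 0 ∧
  q * M + γ * I - μ * R = 0

section TestingFree

variable {α c μ γ p ε a m d q S I R : ℝ}

theorem sicmrEquilibrium_testingFree_iff (hc : c ≠ 0) (hμ : μ ≠ 0) (hμγ : μ + γ ≠ 0)
    (hI : I ≠ 0) :
    sicmrEquilibrium α c μ γ p ε a m d q S I 0 0 R ↔
      S = (μ + γ) / c ∧ I = μ / c * (c * α / (μ * (μ + γ)) - 1) ∧
        R = γ / c * (c * α / (μ * (μ + γ)) - 1) := by
  simp only [sicmrEquilibrium, mul_zero, zero_mul, zero_div, sub_zero, add_zero, sub_self,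
    true_and]
  constructor
  · rintro ⟨h1, h2, h5⟩
    have hS : S = (μ + γ) / c := by
      have : (c * S - (μ + γ)) * I = 0 := by linear_combination h2
      rw [eq_div_iff hc]
      linear_combination (mul_eq_zero.mp this).resolve_right hI
    subst hS
    have hI' : I = μ / c * (c * α / (μ * (μ + γ)) - 1) := by
      field_simp at h1 ⊢
      linear_combination -h1
    refine ⟨rfl, hI', ?_⟩
    subst hI'
    field_simp at h5 ⊢
    linear_combination -h5
  · rintro ⟨rfl, rfl, rfl⟩
    refine ⟨?_, ?_, ?_⟩ <;> field_simp <;> ring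

end TestingFree

theorem sicmr_boundary_equilibrium_general
    (α c μ γ p ε a m d q : ℝ)
    (hc : 0 < c) (hμ : 0 < μ) (hγ : 0 < γ)
    (R₀ : ℝ) (hR₀ : R₀ = c * α / (μ * (μ + γ))) :
    (R₀ > 1 →
      sicmrEquilibrium α c μ γ p ε a m d q
        ((μ + γ) / c) (μ / c * (R₀ - 1)) 0 0 (γ / c * (R₀ - 1)) ∧
      ∀ S I C M R : ℝ, I > 0 → C = 0 → M = 0 →
        sicmrEquilibrium α c μ γ p ε a m d q S I C M R →
        (S, I, C, M, R) =
          ((μ + γ) / c, μ / c * (R₀ - 1), 0, 0, γ / c * (R₀ - 1))) ∧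
    (R₀ ≤ 1 →
      ¬ ∃ S I C M R : ℝ, I > 0 ∧ C = 0 ∧ M = 0 ∧
        sicmrEquilibrium α c μ γ p ε a m d q S I C M R) := by
  subst hR₀
  have hI_pos_iff :
      0 < μ / c * (c * α / (μ * (μ + γ)) - 1) ↔ 1 < c * α / (μ * (μ + γ)) := by
    rw [mul_pos_iff_of_pos_left (div_pos hμ hc), sub_pos]
  have hμγ : μ + γ ≠ 0 := by positivity
  refine ⟨fun hR => ⟨?_, ?_⟩, ?_⟩
  · exact (sicmrEquilibrium_testingFree_iff hc.ne' hμ.ne' hμγ (hI_pos_iff.2 hR).ne').2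
      ⟨rfl, rfl, rfl⟩
  · rintro S I C M R hI rfl rfl heq
    obtain ⟨rfl, rfl, rfl⟩ := (sicmrEquilibrium_testingFree_iff hc.ne' hμ.ne' hμγ hI.ne').1 heq
    rfl
  · rintro hR ⟨S, I, C, M, R, hI, rfl, rfl, heq⟩
    obtain ⟨-, rfl, -⟩ := (sicmrEquilibrium_testingFree_iff hc.ne' hμ.ne' hμγ hI.ne').1 heq
    exact hR.not_gt (hI_pos_iff.1 hI)

/-- If `ℛ₀ > 1`, the boundary (testing-free) point
`E₁ = ((μ+γ)/c, (μ/c)(ℛ₀−1), 0, 0, (γ/c)(ℛ₀−1))` is an equilibrium of the SICMR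
system and is the unique equilibrium with `I > 0`, `C = 0`, `M = 0`.
Conversely, if `ℛ₀ ≤ 1`, there is no equilibrium with `I > 0` and `C = M = 0`. -/
theorem sicmr_boundary_equilibrium
    (α c μ γ p ε a m d q : ℝ)
    (hα : 0 < α) (hc : 0 < c) (hμ : 0 < μ) (hγ : 0 < γ) (hp : 0 < p)
    (hε : 0 < ε) (ha : 0 < a) (hm : 0 < m) (hd : 0 < d) (hq : 0 < q)
    (R₀ : ℝ) (hR₀ : R₀ = c * α / (μ * (μ + γ))) :
    (R₀ > 1 →
      sicmrEquilibrium α c μ γ p ε a m d q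
        ((μ + γ) / c) (μ / c * (R₀ - 1)) 0 0 (γ / c * (R₀ - 1)) ∧
      ∀ S I C M R : ℝ, I > 0 → C = 0 → M = 0 →
        sicmrEquilibrium α c μ γ p ε a m d q S I C M R →
        (S, I, C, M, R) =
          ((μ + γ) / c, μ / c * (R₀ - 1), 0, 0, γ / c * (R₀ - 1))) ∧
    (R₀ ≤ 1 →
      ¬ ∃ S I C M R : ℝ, I > 0 ∧ C = 0 ∧ M = 0 ∧
        sicmrEquilibrium α c μ γ p ε a m d q S I C M R) :=
  sicmr_boundary_equilibrium_general α c μ γ p ε a m d q hc hμ hγ R₀ hR₀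
end

section
/- Let α, c, μ, γ, p, ε, a, m, d, q be positive real constants. If p ≤ m + d + μ, then the SICMR system has no interior equilibrium; that is, there is no point (S, I, C, M, R) with all coordinates strictly positive satisfying α − cSI − μS = 0, cS − pC/(ε + I + aM) − γ − μ = 0, pCI/(ε + I + aM) − (m + d + μ)C = 0, mC − (q + μ)M = 0, and qM + γI − μR = 0. -/
/-! Dividing the `C`-equation of an interior equilibrium by `C > 0` gives
`p * I = (m + d + μ) * (ε + I + a * M)`, but the right-hand side is at least
`p * (ε + I + a * M) > p * I`. -/

lemma mul_eq_mul_of_mul_div_sub_mul_eq_zero {p C I D K : ℝ} (hC : C ≠ 0) (hD : D ≠ 0)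
    (h : p * C * I / D - K * C = 0) : p * I = K * D := by
  field_simp at h
  apply mul_left_cancel₀ hC
  linear_combination h

theorem sicmr_no_interior_equilibrium_general
    (α c μ γ p ε a m d q : ℝ)
    (hp : 0 < p) (hε : 0 < ε) (ha : 0 < a)
    (hple : p ≤ m + d + μ) :
    ¬ ∃ S I C M R : ℝ, 0 < S ∧ 0 < I ∧ 0 < C ∧ 0 < M ∧ 0 < R ∧
      α - c * S * I - μ * S = 0 ∧
      c * S - p * C / (ε + I + a * M) - γ - μ = 0 ∧
      p * C * I / (ε + I + a * M) - (m + d + μ) * C = 0 ∧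
      m * C - (q + μ) * M = 0 ∧
      q * M + γ * I - μ * R = 0 := by
  rintro ⟨S, I, C, M, R, -, hI, hC, hM, -, -, -, hCeq, -, -⟩
  have hID : I < ε + I + a * M := by nlinarith [mul_pos ha hM]
  have hbalance : p * I = (m + d + μ) * (ε + I + a * M) :=
    mul_eq_mul_of_mul_div_sub_mul_eq_zero hC.ne' (by linarith) hCeq
  exact (mul_lt_mul' hple hID hI.le (hp.trans_le hple)).ne hbalance

/-- If `p ≤ m + d + μ`, the SICMR system has no interior
equilibrium, i.e. no equilibrium with all five coordinates strictly positive. -/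
theorem sicmr_no_interior_equilibrium
    (α c μ γ p ε a m d q : ℝ)
    (hα : 0 < α) (hc : 0 < c) (hμ : 0 < μ) (hγ : 0 < γ) (hp : 0 < p)
    (hε : 0 < ε) (ha : 0 < a) (hm : 0 < m) (hd : 0 < d) (hq : 0 < q)
    (hple : p ≤ m + d + μ) :
    ¬ ∃ S I C M R : ℝ, 0 < S ∧ 0 < I ∧ 0 < C ∧ 0 < M ∧ 0 < R ∧
      α - c * S * I - μ * S = 0 ∧
      c * S - p * C / (ε + I + a * M) - γ - μ = 0 ∧
      p * C * I / (ε + I + a * M) - (m + d + μ) * C = 0 ∧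
      m * C - (q + μ) * M = 0 ∧
      q * M + γ * I - μ * R = 0 :=
  sicmr_no_interior_equilibrium_general α c μ γ p ε a m d q hp hε ha hple
end

section
/- Let a₂, a₁, a₀ be real numbers with a₂ > 0 arising as the quadratic coefficients for the interior equilibrium of the SICMR model (with positive parameters and p > m + d + μ), so that a₁ > (a/ε)·a₀ holds. Then: (i) if a₀ ≥ 0 (equivalently ℛ₀ ≤ 1 + εbc/(aμ)), the quadratic f(M) = a₂M² + a₁M + a₀ has no root M > 0; (ii) if a₀ < 0 (equivalently ℛ₀ > 1 + εbc/(aμ)), f has exactly one root M* > 0. -/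
/-! When `a₀ ≥ 0`, the identity
`a₁ - (a/ε) a₀ = (q+μ)(m+d+μ)/m · (ε/a + μ/(bc)) + εb(μ+γ)/a` makes `a₁` positive, so all
coefficients of `f(M) = a₂ M² + a₁ M + a₀` are nonnegative and `f > 0` on `(0, ∞)`. When
`a₀ < 0`, the discriminant `D` exceeds `a₁²`, so `√D > |a₁|` and of the two roots
`(-a₁ ± √D) / (2a₂)` exactly the larger one is positive. -/

theorem existsUnique_pos_root_of_const_neg {A B C : ℝ} (hA : 0 < A) (hC : C < 0) :
    ∃! x : ℝ, 0 < x ∧ A * x ^ 2 + B * x + C = 0 := by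
  have hdisc : B ^ 2 < discrim A B C := by unfold discrim; nlinarith
  set s := √(discrim A B C)
  have hs : discrim A B C = s * s := (Real.mul_self_sqrt ((sq_nonneg B).trans hdisc.le)).symm
  have hBs : |B| < s := abs_lt_of_sq_lt_sq (by rwa [sq s, ← hs]) (Real.sqrt_nonneg _)
  have hroots (x : ℝ) : A * x ^ 2 + B * x + C = 0 ↔
      x = (-B + s) / (2 * A) ∨ x = (-B - s) / (2 * A) := by
    rw [sq]; exact quadratic_eq_zero_iff hA.ne' hs x
  have hplus : 0 < (-B + s) / (2 * A) := div_pos (by linarith [le_abs_self B]) (by positivity)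
  have hminus : (-B - s) / (2 * A) < 0 :=
    div_neg_of_neg_of_pos (by linarith [neg_abs_le B]) (by positivity)
  refine ⟨_, ⟨hplus, (hroots _).mpr (Or.inl rfl)⟩, ?_⟩
  rintro x ⟨hx, hxroot⟩
  exact ((hroots x).mp hxroot).resolve_right (by rintro rfl; linarith)

theorem sicmr_a₁_sub_div_mul_a₀ {α c μ γ ε a m d q b : ℝ} (hε : ε ≠ 0) (ha : a ≠ 0) :
    ((q + μ) * (m + d + μ) / m * (ε / a + μ / (b * c)) +
      2 * ε * b * (μ + γ) / a + μ * (μ + γ) / c - α) -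
      a / ε * (ε / a * (ε * b * (μ + γ) / a + μ * (μ + γ) / c - α)) =
    (q + μ) * (m + d + μ) / m * (ε / a + μ / (b * c)) + ε * b * (μ + γ) / a := by
  field_simp
  ring

theorem sicmr_quadratic_positive_roots_general
    (α c μ γ p ε a m d q : ℝ)
    (hc : 0 < c) (hμ : 0 < μ) (hγ : 0 < γ)
    (hε : 0 < ε) (ha : 0 < a) (hm : 0 < m) (hd : 0 < d) (hq : 0 < q)
    (hpm : p > m + d + μ)
    (b a₂ a₁ a₀ : ℝ)
    (hb : b = a * (m + d + μ) / (p - m - d - μ))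
    (ha₂ : a₂ = (q + μ) * (m + d + μ) / m + (μ + γ) * b)
    (ha₁ : a₁ = (q + μ) * (m + d + μ) / m * (ε / a + μ / (b * c)) +
      2 * ε * b * (μ + γ) / a + μ * (μ + γ) / c - α)
    (ha₀ : a₀ = ε / a * (ε * b * (μ + γ) / a + μ * (μ + γ) / c - α)) :
    (0 ≤ a₀ → ¬ ∃ M : ℝ, 0 < M ∧ a₂ * M ^ 2 + a₁ * M + a₀ = 0) ∧
    (a₀ < 0 → ∃! M : ℝ, 0 < M ∧ a₂ * M ^ 2 + a₁ * M + a₀ = 0) := by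
  have hb_pos : 0 < b := hb ▸ div_pos (by positivity) (by linarith)
  have ha₂_pos : 0 < a₂ := ha₂ ▸ by positivity
  have ha₁_gt : a / ε * a₀ < a₁ := by
    rw [← sub_pos, ha₁, ha₀, sicmr_a₁_sub_div_mul_a₀ hε.ne' ha.ne']
    positivity
  refine ⟨?_, existsUnique_pos_root_of_const_neg ha₂_pos⟩
  rintro ha₀_nonneg ⟨M, hM, hroot⟩
  have ha₁_pos : 0 < a₁ := (by positivity : 0 ≤ a / ε * a₀).trans_lt ha₁_gt
  exact (by positivity : 0 < a₂ * M ^ 2 + a₁ * M + a₀).ne' hroot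

/-- For the quadratic `f(M) = a₂M² + a₁M + a₀` whose
coefficients arise from the interior-equilibrium analysis of the SICMR model
(positive parameters, `p > m + d + μ`), so that `a₂ > 0` and
`a₁ > (a/ε)·a₀`: if `a₀ ≥ 0` (equivalently `ℛ₀ ≤ 1 + εbc/(aμ)`) there is no
positive root, while if `a₀ < 0` (equivalently `ℛ₀ > 1 + εbc/(aμ)`) there is
exactly one positive root. -/
theorem sicmr_quadratic_positive_roots
    (α c μ γ p ε a m d q : ℝ)
    (hα : 0 < α) (hc : 0 < c) (hμ : 0 < μ) (hγ : 0 < γ) (hp : 0 < p)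
    (hε : 0 < ε) (ha : 0 < a) (hm : 0 < m) (hd : 0 < d) (hq : 0 < q)
    (hpm : p > m + d + μ)
    (b R₀ a₂ a₁ a₀ : ℝ)
    (hb : b = a * (m + d + μ) / (p - m - d - μ))
    (hR₀ : R₀ = c * α / (μ * (μ + γ)))
    (ha₂ : a₂ = (q + μ) * (m + d + μ) / m + (μ + γ) * b)
    (ha₁ : a₁ = (q + μ) * (m + d + μ) / m * (ε / a + μ / (b * c)) +
      2 * ε * b * (μ + γ) / a + μ * (μ + γ) / c - α)
    (ha₀ : a₀ = ε / a * (ε * b * (μ + γ) / a + μ * (μ + γ) / c - α)) :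
    (0 ≤ a₀ → ¬ ∃ M : ℝ, 0 < M ∧ a₂ * M ^ 2 + a₁ * M + a₀ = 0) ∧
    (a₀ < 0 → ∃! M : ℝ, 0 < M ∧ a₂ * M ^ 2 + a₁ * M + a₀ = 0) :=
  sicmr_quadratic_positive_roots_general α c μ γ p ε a m d q hc hμ hγ hε ha hm hd hq hpm b a₂ a₁ a₀
    hb ha₂ ha₁ ha₀
end

section
/- Let α, c, μ, γ, p, ε, a, m, d, q be positive reals with p > m + d + μ, set b = a(m+d+μ)/(p−m−d−μ), ℛ₀ = cα/(μ(μ+γ)), Δ = ℛ₀ − 1 − εbc/(aμ), and let a₂, a₁, a₀ be the quadratic coefficients a₂ = (q+μ)(m+d+μ)/m + (μ+γ)b, a₁ = (q+μ)(m+d+μ)/m·(ε/a + μ/(bc)) + 2εb(μ+γ)/a + μ(μ+γ)/c − α, a₀ = (ε/a)(εb(μ+γ)/a + μ(μ+γ)/c − α). Then the algebraic identity a₂·(μΔ/(bc))² + a₁·(μΔ/(bc)) + a₀ = ((q+μ)(m+d+μ)μ²/(m(bc)²))·ℛ₀·Δ holds. Consequently, if Δ > 0, then the unique positive root M* of a₂M²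 + a₁M + a₀ = 0 satisfies M* < μΔ/(bc), and hence the interior equilibrium satisfies I* = b(M* + ε/a) < I₁ = (μ/c)(ℛ₀ − 1). -/
/-!
Evaluating the quadratic `f(M) = a₂M² + a₁M + a₀` at the threshold `X = μΔ/(bc)` gives a positive
multiple of `ℛ₀Δ`, while `f(0) = a₀` is a negative multiple of `Δ`. A convex quadratic that is
negative at `0` is negative on `(0, M*]` for its positive root `M*`, so `f(X) > 0` forces
`M* < X`; and `X` is exactly the value of `M` at which `b(M + ε/a)` equals `I₁`.
-/

theorem quadratic_pos_root_lt_of_eval_pos {a₂ a₁ a₀ M X : ℝ} (ha₂ : 0 ≤ a₂) (ha₀ : a₀ < 0)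
    (hM : 0 < M) (hroot : a₂ * M ^ 2 + a₁ * M + a₀ = 0) (hX : 0 ≤ X)
    (hfX : 0 < a₂ * X ^ 2 + a₁ * X + a₀) : M < X := by
  by_contra! hXM
  have hfactor : M * (a₂ * X ^ 2 + a₁ * X + a₀) = (X - M) * (a₂ * X * M - a₀) := by
    linear_combination X * hroot
  have hnonpos : (X - M) * (a₂ * X * M - a₀) ≤ 0 :=
    mul_nonpos_of_nonpos_of_nonneg (by linarith) (by nlinarith [mul_nonneg ha₂ hX])
  nlinarith [mul_pos hM hfX]

section SICMR

variable {α c μ γ ε a m q k b R₀ Δ a₂ a₁ a₀ : ℝ}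

theorem sicmr_quadratic_eval_threshold (hc : c ≠ 0) (hμ : μ ≠ 0) (hμγ : μ + γ ≠ 0)
    (hb : b ≠ 0)
    (hR₀ : R₀ = c * α / (μ * (μ + γ)))
    (hΔ : Δ = R₀ - 1 - ε * b * c / (a * μ))
    (ha₂ : a₂ = (q + μ) * k / m + (μ + γ) * b)
    (ha₁ : a₁ = (q + μ) * k / m * (ε / a + μ / (b * c)) +
      2 * ε * b * (μ + γ) / a + μ * (μ + γ) / c - α)
    (ha₀ : a₀ = ε / a * (ε * b * (μ + γ) / a + μ * (μ + γ) / c - α)) :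
    a₂ * (μ * Δ / (b * c)) ^ 2 + a₁ * (μ * Δ / (b * c)) + a₀ =
      (q + μ) * k * μ ^ 2 / (m * (b * c) ^ 2) * R₀ * Δ := by
  subst ha₂ ha₁ ha₀ hΔ hR₀
  field_simp
  ring

theorem sicmr_a₀_eq (hc : c ≠ 0) (hμ : μ ≠ 0) (hμγ : μ + γ ≠ 0)
    (hR₀ : R₀ = c * α / (μ * (μ + γ)))
    (hΔ : Δ = R₀ - 1 - ε * b * c / (a * μ))
    (ha₀ : a₀ = ε / a * (ε * b * (μ + γ) / a + μ * (μ + γ) / c - α)) :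
    a₀ = -(ε / a) * (μ * (μ + γ) / c) * Δ := by
  subst ha₀ hΔ hR₀
  field_simp
  ring

theorem sicmr_infected_at_threshold (hc : c ≠ 0) (hμ : μ ≠ 0) (hb : b ≠ 0)
    (hΔ : Δ = R₀ - 1 - ε * b * c / (a * μ)) :
    b * (μ * Δ / (b * c) + ε / a) = μ / c * (R₀ - 1) := by
  subst hΔ
  field_simp
  ring

end SICMR

theorem sicmr_interior_less_than_boundary_general
    (α c μ γ p ε a m d q : ℝ)
    (hα : 0 < α) (hc : 0 < c) (hμ : 0 < μ) (hγ : 0 < γ)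
    (hε : 0 < ε) (ha : 0 < a) (hm : 0 < m) (hd : 0 < d) (hq : 0 < q)
    (hpm : p > m + d + μ)
    (b R₀ Δ a₂ a₁ a₀ : ℝ)
    (hb : b = a * (m + d + μ) / (p - m - d - μ))
    (hR₀ : R₀ = c * α / (μ * (μ + γ)))
    (hΔ : Δ = R₀ - 1 - ε * b * c / (a * μ))
    (ha₂ : a₂ = (q + μ) * (m + d + μ) / m + (μ + γ) * b)
    (ha₁ : a₁ = (q + μ) * (m + d + μ) / m * (ε / a + μ / (b * c)) +
      2 * ε * b * (μ + γ) / a + μ * (μ + γ) / c - α)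
    (ha₀ : a₀ = ε / a * (ε * b * (μ + γ) / a + μ * (μ + γ) / c - α)) :
    a₂ * (μ * Δ / (b * c)) ^ 2 + a₁ * (μ * Δ / (b * c)) + a₀ =
      (q + μ) * (m + d + μ) * μ ^ 2 / (m * (b * c) ^ 2) * R₀ * Δ ∧
    (0 < Δ → ∀ Mstar : ℝ, 0 < Mstar → a₂ * Mstar ^ 2 + a₁ * Mstar + a₀ = 0 →
      Mstar < μ * Δ / (b * c) ∧
      b * (Mstar + ε / a) < μ / c * (R₀ - 1)) := by
  have hb₀ : 0 < b := by rw [hb]; exact div_pos (by positivity) (by linarith)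
  have heval := sicmr_quadratic_eval_threshold hc.ne' hμ.ne' (by positivity) hb₀.ne'
    hR₀ hΔ ha₂ ha₁ ha₀
  refine ⟨heval, fun hΔ₀ Mstar hM hroot => ?_⟩
  have hR₀₀ : 0 < R₀ := by rw [hR₀]; positivity
  have ha₂₀ : 0 < a₂ := by rw [ha₂]; positivity
  have ha₀₀ : a₀ < 0 := by
    rw [sicmr_a₀_eq hc.ne' hμ.ne' (by positivity) hR₀ hΔ ha₀, neg_mul, neg_mul]
    exact neg_neg_of_pos (by positivity)
  have hMX : Mstar < μ * Δ / (b * c) :=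
    quadratic_pos_root_lt_of_eval_pos ha₂₀.le ha₀₀ hM hroot (by positivity)
      (by rw [heval]; positivity)
  refine ⟨hMX, ?_⟩
  calc b * (Mstar + ε / a) < b * (μ * Δ / (b * c) + ε / a) := by gcongr
    _ = μ / c * (R₀ - 1) := sicmr_infected_at_threshold hc.ne' hμ.ne' hb₀.ne' hΔ

/-- The algebraic identity
`a₂(μΔ/(bc))² + a₁(μΔ/(bc)) + a₀ = ((q+μ)(m+d+μ)μ²/(m(bc)²))·ℛ₀·Δ` holds, and
consequently, when `Δ = ℛ₀ − 1 − εbc/(aμ) > 0`, the unique positive root `M*`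
of the quadratic satisfies `M* < μΔ/(bc)`, hence
`I* = b(M* + ε/a) < I₁ = (μ/c)(ℛ₀ − 1)`. -/
theorem sicmr_interior_less_than_boundary
    (α c μ γ p ε a m d q : ℝ)
    (hα : 0 < α) (hc : 0 < c) (hμ : 0 < μ) (hγ : 0 < γ) (hp : 0 < p)
    (hε : 0 < ε) (ha : 0 < a) (hm : 0 < m) (hd : 0 < d) (hq : 0 < q)
    (hpm : p > m + d + μ)
    (b R₀ Δ a₂ a₁ a₀ : ℝ)
    (hb : b = a * (m + d + μ) / (p - m - d - μ))
    (hR₀ : R₀ = c * α / (μ * (μ + γ)))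
    (hΔ : Δ = R₀ - 1 - ε * b * c / (a * μ))
    (ha₂ : a₂ = (q + μ) * (m + d + μ) / m + (μ + γ) * b)
    (ha₁ : a₁ = (q + μ) * (m + d + μ) / m * (ε / a + μ / (b * c)) +
      2 * ε * b * (μ + γ) / a + μ * (μ + γ) / c - α)
    (ha₀ : a₀ = ε / a * (ε * b * (μ + γ) / a + μ * (μ + γ) / c - α)) :
    a₂ * (μ * Δ / (b * c)) ^ 2 + a₁ * (μ * Δ / (b * c)) + a₀ =
      (q + μ) * (m + d + μ) * μ ^ 2 / (m * (b * c) ^ 2) * R₀ * Δ ∧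
    (0 < Δ → ∀ Mstar : ℝ, 0 < Mstar → a₂ * Mstar ^ 2 + a₁ * Mstar + a₀ = 0 →
      Mstar < μ * Δ / (b * c) ∧
      b * (Mstar + ε / a) < μ / c * (R₀ - 1)) :=
  sicmr_interior_less_than_boundary_general α c μ γ p ε a m d q hα hc hμ hγ hε ha hm hd hq hpm b R₀
    Δ a₂ a₁ a₀ hb hR₀ hΔ ha₂ ha₁ ha₀
end

section
/- Let α, c, μ, γ, p, ε, a, m, d, q be positive reals with ℛ₀ = cα/(μ(μ+γ)) ≤ 1. Then the disease-free equilibrium E₀ = (α/μ, 0, 0, 0, 0) is globally asymptotically stable in Ω: every solution (S, I, C, M, R) : [0, ∞) → ℝ^5 of the SICMR system with initial value in Ω = {(S, I, C, M, R) ∈ ℝ₊^5 : S + I + C + M + R ≤ α/μ} satisfies (S(t), I(t), C(t), M(t), R(t)) → E₀ as t → ∞. -/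
/-!
Each equation has the form `x' ≥ g(t) x` with `g` locally bounded as long as the denominator
`ε + I + a M` stays positive, so a continuous-induction argument keeps all five components
nonnegative. Then `N = S + I + C + M + R` satisfies `N' ≤ α - μ N`, so `S ≤ α / μ`, hence
`c S ≤ μ + γ` by `ℛ₀ ≤ 1` and `I' ≤ (c S - μ - γ) I ≤ 0`. If `I` stayed above some `L > 0`,
then `S' ≤ α - (μ + c L) S` would push `S` strictly below `(μ + γ) / c` and make `I` decay
exponentially; so `I → 0`. Finally `C`, `M`, `R` and `α / μ - S` all satisfy `x' ≤ u - b x`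
with `b > 0` and `u → 0`, hence tend to `0`.
-/

open Filter Set Topology

theorem nonneg_of_hasDerivAt_ge_mul {x x' g : ℝ → ℝ} {a b : ℝ}
    (hx : ∀ t ∈ Icc a b, HasDerivAt x (x' t) t) (hg : ContinuousOn g (Icc a b))
    (hgx : ∀ t ∈ Icc a b, g t * x t ≤ x' t) (ha : 0 ≤ x a) :
    ∀ t ∈ Icc a b, 0 ≤ x t := by
  obtain ⟨K, hK⟩ := isCompact_Icc.bddAbove_image hg
  -- Where `-x` touches the barrier it is positive, so `-x' ≤ g · (-x) ≤ K · (-x)` and the barrier,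
  -- growing at rate `K + 1`, outruns it.
  have barrier : ∀ δ > 0, ∀ t ∈ Icc a b, -x t ≤ δ * Real.exp ((K + 1) * (t - a)) := by
    intro δ hδ
    refine image_le_of_deriv_right_lt_deriv_boundary (f' := fun t => -x' t)
      (fun t ht => (hx t ht).continuousAt.neg.continuousWithinAt)
      (fun t ht => (hx t (Ico_subset_Icc_self ht)).neg.hasDerivWithinAt)
      (by rw [Pi.neg_apply, sub_self, mul_zero, Real.exp_zero, mul_one]; linarith)
      (fun t => (((hasDerivAt_id t).sub_const a).const_mul (K + 1)).exp.const_mul δ) ?_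
    intro t ht heq
    have hB : 0 < δ * Real.exp ((K + 1) * (t - a)) := by positivity
    have hgK : g t ≤ K := hK (mem_image_of_mem g (Ico_subset_Icc_self ht))
    have hgx' := hgx t (Ico_subset_Icc_self ht)
    rw [Pi.neg_apply] at heq
    have : g t * x t = -(g t * (δ * Real.exp ((K + 1) * (t - a)))) := by rw [← heq]; ring
    have := mul_le_mul_of_nonneg_right hgK hB.le
    simp only [id, mul_one]
    nlinarith
  intro t ht
  by_contra! hneg
  have hE : 0 < Real.exp ((K + 1) * (t - a)) := Real.exp_pos _
  have := barrier (-x t / 2 / Real.exp ((K + 1) * (t - a))) (div_pos (by linarith) hE) t ht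
  rw [div_mul_cancel₀ _ hE.ne'] at this
  linarith

theorem sub_le_mul_exp_of_hasDerivAt_le {x x' : ℝ → ℝ} {T b r : ℝ}
    (hx : ∀ t ≥ T, HasDerivAt x (x' t) t) (h : ∀ t ≥ T, x' t ≤ b * (r - x t)) :
    ∀ t ≥ T, x t - r ≤ (x T - r) * Real.exp (-b * (t - T)) := by
  intro t ht
  have := le_gronwallBound_of_liminf_deriv_right_le (f := fun t => x t - r) (f' := x')
    (δ := x T - r) (K := -b) (ε := 0) (a := T) (b := t)
    (fun s hs => ((hx s hs.1).continuousAt.sub continuousAt_const).continuousWithinAt)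
    (fun s hs r hr => ((hx s hs.1).sub_const _).hasDerivWithinAt.liminf_right_slope_le hr)
    le_rfl (fun s hs => by have := h s hs.1; linarith) t ⟨ht, le_rfl⟩
  rwa [gronwallBound_ε0] at this

theorem eventually_lt_of_hasDerivAt_le {x x' u : ℝ → ℝ} {b ℓ r : ℝ} (hb : 0 < b)
    (hx : ∀ᶠ t in atTop, HasDerivAt x (x' t) t) (h : ∀ᶠ t in atTop, x' t ≤ u t - b * x t)
    (hu : Tendsto u atTop (𝓝 ℓ)) (hr : ℓ < b * r) : ∀ᶠ t in atTop, x t < r := by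
  obtain ⟨r', hℓr', hr'r⟩ := exists_between ((div_lt_iff₀' hb).2 hr)
  rw [div_lt_iff₀' hb] at hℓr'
  obtain ⟨T, hT⟩ := (hx.and (h.and (hu.eventually (gt_mem_nhds hℓr')))).exists_forall_of_atTop
  have hbound := sub_le_mul_exp_of_hasDerivAt_le (T := T) (b := b) (r := r')
    (fun t ht => (hT t ht).1) (fun t ht => by linarith [(hT t ht).2])
  have hdecay : Tendsto (fun t => (x T - r') * Real.exp (-b * (t - T))) atTop (𝓝 0) := by
    have : Tendsto (fun t => b * (t - T)) atTop atTop :=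
      (tendsto_atTop_add_const_right _ (-T) tendsto_id).const_mul_atTop hb
    simpa [neg_mul] using (Real.tendsto_exp_neg_atTop_nhds_zero.comp this).const_mul (x T - r')
  filter_upwards [hdecay.eventually (gt_mem_nhds (sub_pos.2 hr'r)), eventually_ge_atTop T]
    with t ht hTt
  linarith [hbound t hTt]

theorem tendsto_zero_of_hasDerivAt_le {x x' u : ℝ → ℝ} {b : ℝ} (hb : 0 < b)
    (hx : ∀ᶠ t in atTop, HasDerivAt x (x' t) t) (h : ∀ᶠ t in atTop, x' t ≤ u t - b * x t)
    (hu : Tendsto u atTop (𝓝 0)) (hnn : ∀ᶠ t in atTop, 0 ≤ x t) :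
    Tendsto x atTop (𝓝 0) :=
  tendsto_order.2 ⟨fun _ hr => hnn.mono fun _ h => hr.trans_le h,
    fun _ hr => eventually_lt_of_hasDerivAt_le hb hx h hu (mul_pos hb hr)⟩

section Threshold

variable {S I I' : ℝ → ℝ} {α c μ κ : ℝ}

theorem exists_lt_of_hasDerivAt_le_mul (hc : 0 < c) (hμ : 0 < μ) (hκ : 0 < κ)
    (hR₀ : c * α ≤ μ * κ) (hS : ∀ t, 0 ≤ t → HasDerivAt S (α - c * S t * I t - μ * S t) t)
    (hI : ∀ t, 0 ≤ t → HasDerivAt I (I' t) t) (hI' : ∀ t, 0 ≤ t → I' t ≤ (c * S t - κ) * I t)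
    (hS_nonneg : ∀ t, 0 ≤ t → 0 ≤ S t) {L : ℝ} (hL : 0 < L) : ∃ t, 0 ≤ t ∧ I t < L := by
  by_contra! hLI
  have hb : 0 < μ + c * L := by positivity
  obtain ⟨r, hαr, hrκ⟩ : ∃ r, α / (μ + c * L) < r ∧ r < κ / c := by
    refine exists_between ((div_lt_div_iff₀ hb hc).2 ?_)
    nlinarith [mul_pos hκ (mul_pos hc hL)]
  rw [div_lt_iff₀' hb] at hαr
  rw [lt_div_iff₀' hc] at hrκ
  have hSr : ∀ᶠ t in atTop, S t < r :=
    eventually_lt_of_hasDerivAt_le hb ((eventually_ge_atTop 0).mono hS)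
      ((eventually_ge_atTop 0).mono fun t ht => by
        nlinarith [mul_le_mul_of_nonneg_left (hLI t ht) (mul_nonneg hc.le (hS_nonneg t ht))])
      tendsto_const_nhds hαr
  have hIL : ∀ᶠ t in atTop, I t < L :=
    eventually_lt_of_hasDerivAt_le (u := fun _ => 0) (sub_pos.2 hrκ)
      ((eventually_ge_atTop 0).mono hI)
      (((eventually_ge_atTop 0).and hSr).mono fun t ht => by
        nlinarith [hI' t ht.1, mul_le_mul_of_nonneg_right (mul_le_mul_of_nonneg_left ht.2.le hc.le)
          (hL.le.trans (hLI t ht.1))])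
      tendsto_const_nhds (by simpa using mul_pos (sub_pos.2 hrκ) hL)
  obtain ⟨t, ht, hIt⟩ := ((eventually_ge_atTop 0).and hIL).exists
  exact (hLI t ht).not_gt hIt

theorem tendsto_zero_of_hasDerivAt_le_mul (hc : 0 < c) (hμ : 0 < μ) (hκ : 0 < κ)
    (hR₀ : c * α ≤ μ * κ) (hS : ∀ t, 0 ≤ t → HasDerivAt S (α - c * S t * I t - μ * S t) t)
    (hI : ∀ t, 0 ≤ t → HasDerivAt I (I' t) t) (hI' : ∀ t, 0 ≤ t → I' t ≤ (c * S t - κ) * I t)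
    (hS_nonneg : ∀ t, 0 ≤ t → 0 ≤ S t) (hS_le : ∀ t, 0 ≤ t → S t ≤ α / μ)
    (hI_nonneg : ∀ t, 0 ≤ t → 0 ≤ I t) : Tendsto I atTop (𝓝 0) := by
  have hanti : AntitoneOn I (Ici 0) := by
    refine antitoneOn_of_hasDerivWithinAt_nonpos (convex_Ici 0)
      (fun t ht => (hI t ht).continuousAt.continuousWithinAt)
      (fun t ht => (hI t (interior_subset ht)).hasDerivWithinAt) fun t ht => ?_
    have ht : 0 ≤ t := interior_subset ht
    have hcS : c * S t ≤ κ := calc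
      c * S t ≤ c * α / μ := by
        rw [mul_div_assoc]; exact mul_le_mul_of_nonneg_left (hS_le t ht) hc.le
      _ ≤ κ := (div_le_iff₀ hμ).2 (by linarith)
    nlinarith [hI' t ht, hI_nonneg t ht]
  refine tendsto_order.2 ⟨fun _ hL => ?_, fun L hL => ?_⟩
  · exact (eventually_ge_atTop 0).mono fun t ht => hL.trans_le (hI_nonneg t ht)
  · obtain ⟨t₀, ht₀, hIt₀⟩ := exists_lt_of_hasDerivAt_le_mul hc hμ hκ hR₀ hS hI hI' hS_nonneg hL
    exact (eventually_ge_atTop t₀).mono fun t ht => (hanti ht₀ (ht₀.trans ht) ht).trans_lt hIt₀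

end Threshold

structure IsSICMRSolution (α c μ γ p ε a m d q : ℝ) (S I C M R : ℝ → ℝ) : Prop where
  hasDerivAt_S : ∀ t, 0 ≤ t → HasDerivAt S (α - c * S t * I t - μ * S t) t
  hasDerivAt_I : ∀ t, 0 ≤ t → HasDerivAt I
    (c * S t * I t - p * C t * I t / (ε + I t + a * M t) - γ * I t - μ * I t) t
  hasDerivAt_C : ∀ t, 0 ≤ t → HasDerivAt C
    (p * C t * I t / (ε + I t + a * M t) - m * C t - d * C t - μ * C t) t
  hasDerivAt_M : ∀ t, 0 ≤ t → HasDerivAt M (m * C t - q * M t - μ * M t) t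
  hasDerivAt_R : ∀ t, 0 ≤ t → HasDerivAt R (q * M t + γ * I t - μ * R t) t

namespace IsSICMRSolution

variable {α c μ γ p ε a m d q : ℝ} {S I C M R : ℝ → ℝ}

theorem nonneg_mem_nhdsGE (h : IsSICMRSolution α c μ γ p ε a m d q S I C M R)
    (hα : 0 ≤ α) (hγ : 0 ≤ γ) (hε : 0 < ε) (ha : 0 ≤ a) (hm : 0 ≤ m) (hq : 0 ≤ q)
    {t₀ : ℝ} (ht₀ : 0 ≤ t₀) (h₀ : 0 ≤ S t₀ ∧ 0 ≤ I t₀ ∧ 0 ≤ C t₀ ∧ 0 ≤ M t₀ ∧ 0 ≤ R t₀) :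
    {t | 0 ≤ S t ∧ 0 ≤ I t ∧ 0 ≤ C t ∧ 0 ≤ M t ∧ 0 ≤ R t} ∈ 𝓝[≥] t₀ := by
  obtain ⟨hS₀, hI₀, hC₀, hM₀, hR₀⟩ := h₀
  have hD : ∀ᶠ t in 𝓝[≥] t₀, 0 < ε + I t + a * M t := by
    have hIc := (h.hasDerivAt_I t₀ ht₀).continuousAt
    have hMc := (h.hasDerivAt_M t₀ ht₀).continuousAt
    have : ContinuousAt (fun t => ε + I t + a * M t) t₀ := by fun_prop
    exact nhdsWithin_le_nhds (this.eventually (lt_mem_nhds (by positivity)))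
  obtain ⟨u, htu, hDu⟩ := mem_nhdsGE_iff_exists_Icc_subset.1 hD
  refine mem_nhdsGE_iff_exists_Icc_subset.2 ⟨u, htu, ?_⟩
  have hnn : ∀ t ∈ Icc t₀ u, 0 ≤ t := fun t ht => ht₀.trans ht.1
  have cont {X X' : ℝ → ℝ} (hX : ∀ t, 0 ≤ t → HasDerivAt X (X' t) t) :
      ContinuousOn X (Icc t₀ u) := fun t ht => (hX t (hnn t ht)).continuousAt.continuousWithinAt
  have hSc := cont h.hasDerivAt_S
  have hIc := cont h.hasDerivAt_I
  have hCc := cont h.hasDerivAt_C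
  have hMc := cont h.hasDerivAt_M
  have hD0 : ∀ t ∈ Icc t₀ u, ε + I t + a * M t ≠ 0 := fun t ht => (hDu ht).ne'
  have hI : ∀ t ∈ Icc t₀ u, 0 ≤ I t :=
    nonneg_of_hasDerivAt_ge_mul (g := fun t => c * S t - p * C t / (ε + I t + a * M t) - γ - μ)
      (fun t ht => h.hasDerivAt_I t (hnn t ht)) (by fun_prop (disch := exact hD0))
      (fun t _ => le_of_eq (by ring)) hI₀
  have hC : ∀ t ∈ Icc t₀ u, 0 ≤ C t :=
    nonneg_of_hasDerivAt_ge_mul (g := fun t => p * I t / (ε + I t + a * M t) - m - d - μ)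
      (fun t ht => h.hasDerivAt_C t (hnn t ht)) (by fun_prop (disch := exact hD0))
      (fun t _ => le_of_eq (by ring)) hC₀
  have hM : ∀ t ∈ Icc t₀ u, 0 ≤ M t :=
    nonneg_of_hasDerivAt_ge_mul (g := fun _ => -(q + μ)) (fun t ht => h.hasDerivAt_M t (hnn t ht))
      continuousOn_const (fun t ht => by nlinarith [hC t ht]) hM₀
  have hS : ∀ t ∈ Icc t₀ u, 0 ≤ S t :=
    nonneg_of_hasDerivAt_ge_mul (g := fun t => -(c * I t + μ))
      (fun t ht => h.hasDerivAt_S t (hnn t ht)) (by fun_prop) (fun t _ => by linarith) hS₀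
  have hR : ∀ t ∈ Icc t₀ u, 0 ≤ R t :=
    nonneg_of_hasDerivAt_ge_mul (g := fun _ => -μ) (fun t ht => h.hasDerivAt_R t (hnn t ht))
      continuousOn_const (fun t ht => by nlinarith [hM t ht, hI t ht]) hR₀
  exact fun t ht => ⟨hS t ht, hI t ht, hC t ht, hM t ht, hR t ht⟩

theorem nonneg (h : IsSICMRSolution α c μ γ p ε a m d q S I C M R)
    (hα : 0 ≤ α) (hγ : 0 ≤ γ) (hε : 0 < ε) (ha : 0 ≤ a) (hm : 0 ≤ m) (hq : 0 ≤ q)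
    (h₀ : 0 ≤ S 0 ∧ 0 ≤ I 0 ∧ 0 ≤ C 0 ∧ 0 ≤ M 0 ∧ 0 ≤ R 0) :
    ∀ t, 0 ≤ t → 0 ≤ S t ∧ 0 ≤ I t ∧ 0 ≤ C t ∧ 0 ≤ M t ∧ 0 ≤ R t := by
  intro t ht
  have hclosed : IsClosed
      ({t | 0 ≤ S t ∧ 0 ≤ I t ∧ 0 ≤ C t ∧ 0 ≤ M t ∧ 0 ≤ R t} ∩ Icc 0 t) := by
    rw [inter_comm]
    change IsClosed (Icc 0 t ∩ (fun t => (S t, I t, C t, M t, R t)) ⁻¹' Ici 0)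
    refine ContinuousOn.preimage_isClosed_of_isClosed
      (fun s hs => ContinuousAt.continuousWithinAt ?_) isClosed_Icc isClosed_Ici
    exact (h.hasDerivAt_S s hs.1).continuousAt.prodMk <|
      (h.hasDerivAt_I s hs.1).continuousAt.prodMk <|
      (h.hasDerivAt_C s hs.1).continuousAt.prodMk <|
      (h.hasDerivAt_M s hs.1).continuousAt.prodMk (h.hasDerivAt_R s hs.1).continuousAt
  exact hclosed.Icc_subset_of_forall_mem_nhdsWithin h₀
    (fun s hs => nhdsWithin_mono _ Ioi_subset_Ici_self
      (h.nonneg_mem_nhdsGE hα hγ hε ha hm hq hs.2.1 hs.1)) ⟨ht, le_rfl⟩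

theorem total_le (h : IsSICMRSolution α c μ γ p ε a m d q S I C M R) (hμ : 0 < μ) (hd : 0 ≤ d)
    (hC : ∀ t, 0 ≤ t → 0 ≤ C t) (h₀ : S 0 + I 0 + C 0 + M 0 + R 0 ≤ α / μ) :
    ∀ t, 0 ≤ t → S t + I t + C t + M t + R t ≤ α / μ := by
  intro t ht
  have hN := sub_le_mul_exp_of_hasDerivAt_le (x := fun t => S t + I t + C t + M t + R t)
    (T := 0) (b := μ) (r := α / μ)
    (fun t ht => ((((h.hasDerivAt_S t ht).add (h.hasDerivAt_I t ht)).add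
      (h.hasDerivAt_C t ht)).add (h.hasDerivAt_M t ht)).add (h.hasDerivAt_R t ht))
    (fun t ht => by
      rw [mul_sub, mul_div_cancel₀ _ hμ.ne']
      linarith [mul_nonneg hd (hC t ht)])
    t ht
  have := mul_nonpos_of_nonpos_of_nonneg (sub_nonpos.2 h₀) (Real.exp_pos (-μ * (t - 0))).le
  linarith

theorem tendsto_of_tendsto_I (h : IsSICMRSolution α c μ γ p ε a m d q S I C M R)
    (hc : 0 ≤ c) (hμ : 0 < μ) (hp : 0 ≤ p) (hε : 0 < ε) (ha : 0 ≤ a) (hm : 0 ≤ m)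
    (hd : 0 ≤ d) (hq : 0 ≤ q)
    (hnn : ∀ t, 0 ≤ t → 0 ≤ S t ∧ 0 ≤ I t ∧ 0 ≤ C t ∧ 0 ≤ M t ∧ 0 ≤ R t)
    (hS_le : ∀ t, 0 ≤ t → S t ≤ α / μ) (hC_le : ∀ t, 0 ≤ t → C t ≤ α / μ)
    (hI : Tendsto I atTop (𝓝 0)) :
    Tendsto (fun t => (S t, I t, C t, M t, R t)) atTop (𝓝 (α / μ, 0, 0, 0, 0)) := by
  have ev {P : ℝ → Prop} (hP : ∀ t, 0 ≤ t → P t) : ∀ᶠ t in atTop, P t :=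
    (eventually_ge_atTop 0).mono hP
  have hC : Tendsto C atTop (𝓝 0) := by
    refine tendsto_zero_of_hasDerivAt_le (b := m + d + μ) (u := fun t => p * (α / μ) * I t / ε)
      (by positivity) (ev h.hasDerivAt_C) (ev fun t ht => ?_)
      (by simpa using (hI.const_mul (p * (α / μ))).div_const ε) (ev fun t ht => (hnn t ht).2.2.1)
    obtain ⟨-, hIt, hCt, hMt, -⟩ := hnn t ht
    have : p * C t * I t / (ε + I t + a * M t) ≤ p * (α / μ) * I t / ε := calc
      _ ≤ p * C t * I t / ε :=
        div_le_div_of_nonneg_left (by positivity) hε (by nlinarith [mul_nonneg ha hMt])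
      _ ≤ _ := by gcongr; exact hC_le t ht
    linarith
  have hM : Tendsto M atTop (𝓝 0) :=
    tendsto_zero_of_hasDerivAt_le (b := q + μ) (u := fun t => m * C t) (by positivity)
      (ev h.hasDerivAt_M) (ev fun t _ => by linarith) (by simpa using hC.const_mul m)
      (ev fun t ht => (hnn t ht).2.2.2.1)
  have hR : Tendsto R atTop (𝓝 0) :=
    tendsto_zero_of_hasDerivAt_le (b := μ) (u := fun t => q * M t + γ * I t) hμ
      (ev h.hasDerivAt_R) (ev fun t _ => by linarith)
      (by simpa using (hM.const_mul q).add (hI.const_mul γ)) (ev fun t ht => (hnn t ht).2.2.2.2)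
  have hS : Tendsto (fun t => α / μ - S t) atTop (𝓝 0) := by
    refine tendsto_zero_of_hasDerivAt_le (b := μ) (u := fun t => c * (α / μ) * I t) hμ
      (ev fun t ht => (h.hasDerivAt_S t ht).const_sub (α / μ)) (ev fun t ht => ?_)
      (by simpa using hI.const_mul (c * (α / μ))) (ev fun t ht => ?_)
    · have := mul_le_mul_of_nonneg_right (mul_le_mul_of_nonneg_left (hS_le t ht) hc)
        (hnn t ht).2.1
      rw [mul_sub, mul_div_cancel₀ _ hμ.ne']
      linarith
    · exact sub_nonneg.2 (hS_le t ht)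
  refine .prodMk_nhds ?_ (hI.prodMk_nhds (hC.prodMk_nhds (hM.prodMk_nhds hR)))
  simpa using hS.const_sub (α / μ)

end IsSICMRSolution

/-- If `ℛ₀ = cα/(μ(μ+γ)) ≤ 1`, the disease-free equilibrium
`E₀ = (α/μ, 0, 0, 0, 0)` is globally asymptotically stable in `Ω`: every
solution of the SICMR system on `[0, ∞)` whose initial value lies in `Ω`
converges to `E₀` as `t → ∞`. -/
theorem sicmr_disease_free_globally_stable
    (α c μ γ p ε a m d q : ℝ)
    (hα : 0 < α) (hc : 0 < c) (hμ : 0 < μ) (hγ : 0 < γ) (hp : 0 < p)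
    (hε : 0 < ε) (ha : 0 < a) (hm : 0 < m) (hd : 0 < d) (hq : 0 < q)
    (hR₀ : c * α / (μ * (μ + γ)) ≤ 1)
    (S I C M R : ℝ → ℝ)
    (hS : ∀ t, 0 ≤ t → HasDerivAt S (α - c * S t * I t - μ * S t) t)
    (hI : ∀ t, 0 ≤ t → HasDerivAt I
      (c * S t * I t - p * C t * I t / (ε + I t + a * M t) - γ * I t - μ * I t) t)
    (hC : ∀ t, 0 ≤ t → HasDerivAt C
      (p * C t * I t / (ε + I t + a * M t) - m * C t - d * C t - μ * C t) t)
    (hM : ∀ t, 0 ≤ t → HasDerivAt M (m * C t - q * M t - μ * M t) t)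
    (hR : ∀ t, 0 ≤ t → HasDerivAt R (q * M t + γ * I t - μ * R t) t)
    (h0 : 0 ≤ S 0 ∧ 0 ≤ I 0 ∧ 0 ≤ C 0 ∧ 0 ≤ M 0 ∧ 0 ≤ R 0 ∧
      S 0 + I 0 + C 0 + M 0 + R 0 ≤ α / μ) :
    Tendsto (fun t => (S t, I t, C t, M t, R t)) atTop
      (nhds (α / μ, (0 : ℝ), (0 : ℝ), (0 : ℝ), (0 : ℝ))) := by
  have hsol : IsSICMRSolution α c μ γ p ε a m d q S I C M R := ⟨hS, hI, hC, hM, hR⟩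
  obtain ⟨hS0, hI0, hC0, hM0, hR0, hN0⟩ := h0
  have hnn := hsol.nonneg hα.le hγ.le hε ha.le hm.le hq.le ⟨hS0, hI0, hC0, hM0, hR0⟩
  have hN := hsol.total_le hμ hd.le (fun t ht => (hnn t ht).2.2.1) hN0
  have hS_le : ∀ t, 0 ≤ t → S t ≤ α / μ := fun t ht => by
    obtain ⟨-, hIt, hCt, hMt, hRt⟩ := hnn t ht
    linarith [hN t ht]
  have hC_le : ∀ t, 0 ≤ t → C t ≤ α / μ := fun t ht => by
    obtain ⟨hSt, hIt, -, hMt, hRt⟩ := hnn t ht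
    linarith [hN t ht]
  have hI_le : ∀ t, 0 ≤ t → c * S t * I t - p * C t * I t / (ε + I t + a * M t) - γ * I t
      - μ * I t ≤ (c * S t - (μ + γ)) * I t := fun t ht => by
    obtain ⟨-, hIt, hCt, hMt, -⟩ := hnn t ht
    have : 0 ≤ p * C t * I t / (ε + I t + a * M t) := by positivity
    linarith
  have hI_lim := tendsto_zero_of_hasDerivAt_le_mul hc hμ (by positivity)
    ((div_le_one (by positivity)).1 hR₀) hS hI hI_le (fun t ht => (hnn t ht).1) hS_le
    (fun t ht => (hnn t ht).2.1)
  exact hsol.tendsto_of_tendsto_I hc.le hμ hp.le hε ha.le hm.le hd.le hq.le hnn hS_le hC_le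
    hI_lim
end

section
/- Let α, c, μ, γ, m, d, q be positive reals and set ℛ₀ = cα/(μ(μ+γ)). The Jacobian of the SICMR system at the disease-free equilibrium E₀ = (α/μ, 0, 0, 0, 0) is the 5×5 matrix J(E₀) = [[−μ, −cα/μ, 0, 0, 0], [0, (μ+γ)(ℛ₀−1), 0, 0, 0], [0, 0, −(m+d+μ), 0, 0], [0, 0, m, −(q+μ), 0], [0, γ, 0, q, −μ]], whose eigenvalues are −μ (with multiplicity two), (μ+γ)(ℛ₀−1), −(m+d+μ), and −(q+μ). In particular, if ℛ₀ > 1 then J(E₀) has a positive real eigenvalue (μ+γ)(ℛ₀−1), so E₀ is linearly unstable. -/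
/-!
At `E₀` both `I` and `C` vanish, so the saturated incidence `pCI/(ε + I + aM)` is a product of
two functions vanishing at `E₀` (the denominator is `ε ≠ 0` there) and drops out of the
linearisation. What remains is linear except for `cSI`, whose derivative at `E₀` is
`c (α/μ) dI`. Listing the compartments in the order `R, M, C, S, I` makes `J(E₀)` upper
triangular, so its characteristic polynomial is the product over its diagonal, and
`(μ + γ)(ℛ₀ - 1) = cα/μ - γ - μ`.
-/

open Polynomial

theorem Matrix.charpoly_of_blockTriangular_of_injective {n R α : Type*} [Fintype n]
    [DecidableEq n] [CommRing R] [LinearOrder α] {M : Matrix n n R} {b : n → α}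
    (hM : M.BlockTriangular b) (hb : Function.Injective b) :
    M.charpoly = ∏ i, (X - C (M i i)) := by
  let : LinearOrder n := LinearOrder.lift' b hb
  exact M.charpoly_of_isUpperTriangular hM

theorem hasFDerivAt_mul_of_eq_zero {𝕜 E : Type*} [NontriviallyNormedField 𝕜]
    [NormedAddCommGroup E] [NormedSpace 𝕜 E] {f g : E → 𝕜} {x : E}
    (hf : DifferentiableAt 𝕜 f x) (hg : DifferentiableAt 𝕜 g x)
    (hfx : f x = 0) (hgx : g x = 0) :
    HasFDerivAt (fun y => f y * g y) (0 : E →L[𝕜] 𝕜) x := by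
  refine (hf.hasFDerivAt.fun_mul hg.hasFDerivAt).congr_fderiv ?_
  ext v
  simp [hfx, hgx]

noncomputable section SICMR

variable (α c μ γ p ε a m d q : ℝ)

def sicmrField (x : Fin 5 → ℝ) : Fin 5 → ℝ :=
  ![α - c * x 0 * x 1 - μ * x 0,
    c * x 0 * x 1 - p * x 2 * x 1 / (ε + x 1 + a * x 3) - γ * x 1 - μ * x 1,
    p * x 2 * x 1 / (ε + x 1 + a * x 3) - m * x 2 - d * x 2 - μ * x 2,
    m * x 2 - q * x 3 - μ * x 3,
    q * x 3 + γ * x 1 - μ * x 4]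

def sicmrDiseaseFree : Fin 5 → ℝ := ![α / μ, 0, 0, 0, 0]

def sicmrJacobianDiseaseFree : Matrix (Fin 5) (Fin 5) ℝ :=
  !![-μ, -(c * α / μ), 0, 0, 0;
     0, c * α / μ - γ - μ, 0, 0, 0;
     0, 0, -(m + d + μ), 0, 0;
     0, 0, m, -(q + μ), 0;
     0, γ, 0, q, -μ]

theorem sicmrJacobianDiseaseFree_blockTriangular :
    (sicmrJacobianDiseaseFree α c μ γ m d q).BlockTriangular ![3, 4, 2, 1, 0] := by
  intro i j hij
  fin_cases i <;> fin_cases j <;> simp_all [sicmrJacobianDiseaseFree]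

theorem charpoly_sicmrJacobianDiseaseFree :
    (sicmrJacobianDiseaseFree α c μ γ m d q).charpoly = (X + C μ) ^ 2 *
      (X - C (c * α / μ - γ - μ)) * (X + C (m + d + μ)) * (X + C (q + μ)) := by
  rw [Matrix.charpoly_of_blockTriangular_of_injective
    (sicmrJacobianDiseaseFree_blockTriangular α c μ γ m d q) (by decide)]
  simp [Fin.prod_univ_five, sicmrJacobianDiseaseFree]
  ring

variable {α c μ γ p ε a m d q}

theorem hasFDerivAt_sicmrIncidence_diseaseFree (hε : ε ≠ 0) :
    HasFDerivAt (fun x : Fin 5 → ℝ => p * x 2 * x 1 / (ε + x 1 + a * x 3))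
      (0 : (Fin 5 → ℝ) →L[ℝ] ℝ) (sicmrDiseaseFree α μ) := by
  have h : HasFDerivAt (fun x : Fin 5 → ℝ => p * x 2 * (x 1 / (ε + x 1 + a * x 3))) 0
      (sicmrDiseaseFree α μ) :=
    hasFDerivAt_mul_of_eq_zero (by fun_prop) (by fun_prop (disch := simpa [sicmrDiseaseFree]))
      (by simp [sicmrDiseaseFree]) (by simp [sicmrDiseaseFree])
  simpa only [mul_div_assoc] using h

theorem hasFDerivAt_sicmrField_diseaseFree (hε : ε ≠ 0) :
    HasFDerivAt (sicmrField α c μ γ p ε a m d q)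
      (Matrix.toLin' (sicmrJacobianDiseaseFree α c μ γ m d q)).toContinuousLinearMap
      (sicmrDiseaseFree α μ) := by
  have hI := hasFDerivAt_sicmrIncidence_diseaseFree (p := p) (a := a) (α := α) (μ := μ) hε
  have P (j : Fin 5) :=
    hasFDerivAt_apply (𝕜 := ℝ) (F' := fun _ => ℝ) j (sicmrDiseaseFree α μ)
  rw [hasFDerivAt_pi']
  intro i
  fin_cases i
  · refine (((hasFDerivAt_const α _).sub (((P 0).const_mul c).mul (P 1))).sub
      ((P 0).const_mul μ)).congr_fderiv ?_
    ext v
    simp [sicmrJacobianDiseaseFree, sicmrDiseaseFree, dotProduct, Fin.sum_univ_five]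
    ring
  · refine ((((((P 0).const_mul c).mul (P 1)).sub hI).sub ((P 1).const_mul γ)).sub
      ((P 1).const_mul μ)).congr_fderiv ?_
    ext v
    simp [sicmrJacobianDiseaseFree, sicmrDiseaseFree, dotProduct, Fin.sum_univ_five]
    ring
  · refine (((hI.sub ((P 2).const_mul m)).sub ((P 2).const_mul d)).sub
      ((P 2).const_mul μ)).congr_fderiv ?_
    ext v
    simp [sicmrJacobianDiseaseFree, dotProduct, Fin.sum_univ_five]
    ring
  · refine ((((P 2).const_mul m).sub ((P 3).const_mul q)).sub
      ((P 3).const_mul μ)).congr_fderiv ?_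
    ext v
    simp [sicmrJacobianDiseaseFree, dotProduct, Fin.sum_univ_five]
    ring
  · refine ((((P 3).const_mul q).add ((P 1).const_mul γ)).sub
      ((P 4).const_mul μ)).congr_fderiv ?_
    ext v
    simp [sicmrJacobianDiseaseFree, dotProduct, Fin.sum_univ_five]
    ring

end SICMR

theorem sicmr_jacobian_at_disease_free_general
    (α c μ γ p ε a m d q : ℝ)
    (hμ : 0 < μ) (hγ : 0 < γ)
    (hε : 0 < ε)
    (R₀ : ℝ) (hR₀ : R₀ = c * α / (μ * (μ + γ)))
    (J : Matrix (Fin 5) (Fin 5) ℝ)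
    (hJ : J = !![-μ, -(c * α / μ), 0, 0, 0;
                 0, (μ + γ) * (R₀ - 1), 0, 0, 0;
                 0, 0, -(m + d + μ), 0, 0;
                 0, 0, m, -(q + μ), 0;
                 0, γ, 0, q, -μ]) :
    HasFDerivAt
      (fun x : Fin 5 → ℝ =>
        ![α - c * x 0 * x 1 - μ * x 0,
          c * x 0 * x 1 - p * x 2 * x 1 / (ε + x 1 + a * x 3) - γ * x 1 - μ * x 1,
          p * x 2 * x 1 / (ε + x 1 + a * x 3) - m * x 2 - d * x 2 - μ * x 2,
          m * x 2 - q * x 3 - μ * x 3,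
          q * x 3 + γ * x 1 - μ * x 4])
      (LinearMap.toContinuousLinearMap (Matrix.toLin' J))
      ![α / μ, 0, 0, 0, 0] ∧
    J.charpoly = (X + C μ) ^ 2 * (X - C ((μ + γ) * (R₀ - 1))) *
      (X + C (m + d + μ)) * (X + C (q + μ)) ∧
    (R₀ > 1 → (μ + γ) * (R₀ - 1) ∈ spectrum ℝ J ∧ 0 < (μ + γ) * (R₀ - 1)) := by
  have hgrowth : (μ + γ) * (R₀ - 1) = c * α / μ - γ - μ := by
    rw [hR₀]
    field_simp
    ring
  have hJ' : J = sicmrJacobianDiseaseFree α c μ γ m d q := by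
    rw [hJ, hgrowth]
    rfl
  have hcharpoly := charpoly_sicmrJacobianDiseaseFree α c μ γ m d q
  rw [← hJ', ← hgrowth] at hcharpoly
  refine ⟨hJ' ▸ hasFDerivAt_sicmrField_diseaseFree hε.ne', hcharpoly, fun hR => ⟨?_, ?_⟩⟩
  · exact Matrix.mem_spectrum_of_isRoot_charpoly (by simp [hcharpoly])
  · exact mul_pos (by positivity) (sub_pos.mpr hR)

/-- The Jacobian of the SICMR vector field at the
disease-free equilibrium `E₀ = (α/μ, 0, 0, 0, 0)` is the displayed matrix
`J(E₀)`, whose eigenvalues (with multiplicity, via the characteristic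
polynomial) are `−μ` (twice), `(μ+γ)(ℛ₀−1)`, `−(m+d+μ)` and `−(q+μ)`.
In particular, if `ℛ₀ > 1` then `J(E₀)` has the positive real eigenvalue
`(μ+γ)(ℛ₀−1)`, so `E₀` is linearly unstable. -/
theorem sicmr_jacobian_at_disease_free
    (α c μ γ p ε a m d q : ℝ)
    (hα : 0 < α) (hc : 0 < c) (hμ : 0 < μ) (hγ : 0 < γ) (hp : 0 < p)
    (hε : 0 < ε) (ha : 0 < a) (hm : 0 < m) (hd : 0 < d) (hq : 0 < q)
    (R₀ : ℝ) (hR₀ : R₀ = c * α / (μ * (μ + γ)))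
    (J : Matrix (Fin 5) (Fin 5) ℝ)
    (hJ : J = !![-μ, -(c * α / μ), 0, 0, 0;
                 0, (μ + γ) * (R₀ - 1), 0, 0, 0;
                 0, 0, -(m + d + μ), 0, 0;
                 0, 0, m, -(q + μ), 0;
                 0, γ, 0, q, -μ]) :
    HasFDerivAt
      (fun x : Fin 5 → ℝ =>
        ![α - c * x 0 * x 1 - μ * x 0,
          c * x 0 * x 1 - p * x 2 * x 1 / (ε + x 1 + a * x 3) - γ * x 1 - μ * x 1,
          p * x 2 * x 1 / (ε + x 1 + a * x 3) - m * x 2 - d * x 2 - μ * x 2,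
          m * x 2 - q * x 3 - μ * x 3,
          q * x 3 + γ * x 1 - μ * x 4])
      (LinearMap.toContinuousLinearMap (Matrix.toLin' J))
      ![α / μ, 0, 0, 0, 0] ∧
    J.charpoly = (X + C μ) ^ 2 * (X - C ((μ + γ) * (R₀ - 1))) *
      (X + C (m + d + μ)) * (X + C (q + μ)) ∧
    (R₀ > 1 → (μ + γ) * (R₀ - 1) ∈ spectrum ℝ J ∧ 0 < (μ + γ) * (R₀ - 1)) :=
  sicmr_jacobian_at_disease_free_general α c μ γ p ε a m d q hμ hγ hε R₀ hR₀ J hJ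
end

section
/- Let α, c, μ, γ, d, q be positive reals with ℛ₀ = cα/(μ(μ+γ)) ≤ 1. Then for every (S, I, C, M, R) ∈ Ω = {(S, I, C, M, R) ∈ ℝ₊^5 : S + I + C + M + R ≤ α/μ}, the derivative of the Lyapunov function 𝒱 = I + C + M along the SICMR flow satisfies cSI − (γ+μ)I − (d+μ)C − (q+μ)M ≤ (μ+γ)(ℛ₀ − 1)I − (d+μ)C − (q+μ)M ≤ 0. -/
/-! On `Ω` the susceptible class satisfies `S ≤ α/μ`, so the incidence `cSI` is at most
`(cα/μ) I = (μ+γ) ℛ₀ I`; this is the first inequality. When `ℛ₀ ≤ 1` the bound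
`(μ+γ)(ℛ₀ − 1) I − (d+μ) C − (q+μ) M` is a sum of nonpositive terms. -/

lemma mul_div_mul_sub_one {K : Type*} [Field K] {a b m : K} (hm : m ≠ 0) (ha : a ≠ 0) :
    a * (b / (m * a) - 1) = b / m - a := by
  field_simp

theorem sicmr_lyapunov_V_nonpositive_general
    (α c μ γ d q : ℝ)
    (hc : 0 < c) (hμ : 0 < μ) (hγ : 0 < γ) (hd : 0 < d) (hq : 0 < q)
    (hR₀ : c * α / (μ * (μ + γ)) ≤ 1)
    (S I C M R : ℝ)
    (hInn : 0 ≤ I) (hCnn : 0 ≤ C) (hMnn : 0 ≤ M) (hRnn : 0 ≤ R)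
    (hsum : S + I + C + M + R ≤ α / μ) :
    c * S * I - (γ + μ) * I - (d + μ) * C - (q + μ) * M ≤
      (μ + γ) * (c * α / (μ * (μ + γ)) - 1) * I - (d + μ) * C - (q + μ) * M ∧
    (μ + γ) * (c * α / (μ * (μ + γ)) - 1) * I - (d + μ) * C - (q + μ) * M ≤ 0 := by
  have hμγ : 0 < μ + γ := add_pos hμ hγ
  have hS : S ≤ α / μ := by linarith
  have hincidence : c * S * I ≤ c * α / μ * I := by
    rw [mul_div_assoc]
    gcongr
  have hI_term : (μ + γ) * (c * α / (μ * (μ + γ)) - 1) * I ≤ 0 :=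
    mul_nonpos_of_nonpos_of_nonneg (mul_nonpos_of_nonneg_of_nonpos hμγ.le (by linarith)) hInn
  have hC_term : 0 ≤ (d + μ) * C := mul_nonneg (by linarith) hCnn
  have hM_term : 0 ≤ (q + μ) * M := mul_nonneg (by linarith) hMnn
  rw [mul_div_mul_sub_one hμ.ne' hμγ.ne'] at hI_term ⊢
  constructor <;> linarith

/-- If `ℛ₀ = cα/(μ(μ+γ)) ≤ 1`, then at every point of
`Ω = {(S,I,C,M,R) ∈ ℝ₊⁵ : S + I + C + M + R ≤ α/μ}` the derivative of the
Lyapunov function `𝒱 = I + C + M` along the SICMR flow satisfies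
`𝒱' = cSI − (γ+μ)I − (d+μ)C − (q+μ)M ≤ (μ+γ)(ℛ₀−1)I − (d+μ)C − (q+μ)M ≤ 0`. -/
theorem sicmr_lyapunov_V_nonpositive
    (α c μ γ d q : ℝ)
    (hα : 0 < α) (hc : 0 < c) (hμ : 0 < μ) (hγ : 0 < γ) (hd : 0 < d) (hq : 0 < q)
    (hR₀ : c * α / (μ * (μ + γ)) ≤ 1)
    (S I C M R : ℝ)
    (hSnn : 0 ≤ S) (hInn : 0 ≤ I) (hCnn : 0 ≤ C) (hMnn : 0 ≤ M) (hRnn : 0 ≤ R)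
    (hsum : S + I + C + M + R ≤ α / μ) :
    c * S * I - (γ + μ) * I - (d + μ) * C - (q + μ) * M ≤
      (μ + γ) * (c * α / (μ * (μ + γ)) - 1) * I - (d + μ) * C - (q + μ) * M ∧
    (μ + γ) * (c * α / (μ * (μ + γ)) - 1) * I - (d + μ) * C - (q + μ) * M ≤ 0 :=
  sicmr_lyapunov_V_nonpositive_general α c μ γ d q hc hμ hγ hd hq hR₀ S I C M R hInn hCnn hMnn hRnn
    hsum
end

section
/- Let α, c, μ, γ, p, ε, a, m, d, q be positive reals with ℛ₀ = cα/(μ(μ+γ)) > 1, set b = a(m+d+μ)/(p−m−d−μ) when p ≠ m+d+μ, and let I₁ = (μ/c)(ℛ₀ − 1). Then pI₁/(ε + I₁) − (m + d + μ) is an eigenvalue of the Jacobian J(E₁) of the SICMR system at the boundary equilibrium E₁ = ((μ+γ)/c, I₁, 0, 0, (γ/c)(ℛ₀−1)), and it satisfies the identity pI₁/(ε + I₁) − (m + d + μ) = (μ(p−m−d−μ)/(c(ε + I₁)))·(ℛ₀ − 1 − εbc/(aμ)). Consequently: if p < m + d + μ and 1 < ℛ₀ < 1 + εbc/(aμ),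 this eigenvalue is positive and E₁ is linearly unstable; and if p > m + d + μ and ℛ₀ > 1 + εbc/(aμ), this eigenvalue is positive and E₁ is linearly unstable. -/
/-!
The third row of `J(E₁)` vanishes off the diagonal (the compartment `C` decouples at `C = 0`),
so its diagonal entry is an eigenvalue. Substituting `c I₁ = μ (ℛ₀ − 1)` and clearing denominators
turns `p I₁/(ε + I₁) − (m + d + μ)` into the stated product, whose two factors have the same sign
in each of the two parameter regimes.
-/

theorem Matrix.diag_mem_spectrum_of_offDiag_row_eq_zero {n R : Type*} [Fintype n] [DecidableEq n]
    [CommRing R] [Nontrivial R] (A : Matrix n n R) (i : n) (h : ∀ j, j ≠ i → A i j = 0) :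
    A i i ∈ spectrum R A := by
  rw [spectrum.mem_iff, Matrix.isUnit_iff_isUnit_det,
    Matrix.det_eq_zero_of_row_eq_zero i fun j => ?_]
  · exact not_isUnit_zero
  rcases eq_or_ne j i with rfl | hj
  · simp [Matrix.algebraMap_eq_diagonal]
  · simp [Matrix.algebraMap_eq_diagonal, Matrix.diagonal_apply_ne' _ hj, h j hj]

theorem infected_threshold_eigenvalue_eq {p κ ε c μ a R₀ I : ℝ} (hc : c ≠ 0) (hμ : μ ≠ 0)
    (ha : a ≠ 0) (hpκ : p ≠ κ) (hεI : ε + I ≠ 0) (hI : I = μ / c * (R₀ - 1)) :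
    p * I / (ε + I) - κ =
      μ * (p - κ) / (c * (ε + I)) * (R₀ - 1 - ε * (a * κ / (p - κ)) * c / (a * μ)) := by
  have hR₀ : R₀ - 1 = c * I / μ := by
    rw [hI]
    field_simp
  have hpκ' : p - κ ≠ 0 := sub_ne_zero.mpr hpκ
  rw [hR₀]
  field_simp
  ring

theorem sicmr_boundary_jacobian_eigenvalue_general
    (c μ γ p ε a m d q : ℝ)
    (hc : 0 < c) (hμ : 0 < μ)
    (hε : 0 < ε) (ha : 0 < a)
    (hpne : p ≠ m + d + μ)
    (R₀ b I₁ lam₃ : ℝ)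
    (hR₀gt : R₀ > 1)
    (hb : b = a * (m + d + μ) / (p - m - d - μ))
    (hI₁ : I₁ = μ / c * (R₀ - 1))
    (hlam₃ : lam₃ = p * I₁ / (ε + I₁) - (m + d + μ))
    (J : Matrix (Fin 5) (Fin 5) ℝ)
    (hJ : J = !![-(c * I₁) - μ, -(μ + γ), 0, 0, 0;
                 c * I₁, 0, -(p * I₁ / (ε + I₁)), 0, 0;
                 0, 0, p * I₁ / (ε + I₁) - (m + d + μ), 0, 0;
                 0, 0, m, -(q + μ), 0;
                 0, γ, 0, q, -μ]) :
    lam₃ ∈ spectrum ℝ J ∧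
    lam₃ = μ * (p - m - d - μ) / (c * (ε + I₁)) * (R₀ - 1 - ε * b * c / (a * μ)) ∧
    (p < m + d + μ → 1 < R₀ → R₀ < 1 + ε * b * c / (a * μ) → 0 < lam₃) ∧
    (p > m + d + μ → R₀ > 1 + ε * b * c / (a * μ) → 0 < lam₃) := by
  have hI₁pos : 0 < I₁ := by
    rw [hI₁]
    have : 0 < R₀ - 1 := by linarith
    positivity
  have hεI : 0 < ε + I₁ := by linarith
  have hident : lam₃ = μ * (p - m - d - μ) / (c * (ε + I₁)) * (R₀ - 1 - ε * b * c / (a * μ)) := by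
    rw [hlam₃, hb, show p - m - d - μ = p - (m + d + μ) by ring]
    exact infected_threshold_eigenvalue_eq hc.ne' hμ.ne' ha.ne' hpne hεI.ne' hI₁
  refine ⟨?_, hident, fun hlt _ hR₀lt => ?_, fun hgt hR₀gt' => ?_⟩
  · have h := J.diag_mem_spectrum_of_offDiag_row_eq_zero 2 fun j hj => by
      fin_cases j <;> simp_all
    simpa [hJ, ← hlam₃] using h
  · rw [hident]
    exact mul_pos_of_neg_of_neg
      (div_neg_of_neg_of_pos (mul_neg_of_pos_of_neg hμ (by linarith)) (by positivity))
      (by linarith)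
  · rw [hident]
    exact mul_pos (div_pos (mul_pos hμ (by linarith)) (by positivity)) (by linarith)

/-- The quantity `λ₃ = pI₁/(ε+I₁) − (m+d+μ)` is an eigenvalue
of the Jacobian `J(E₁)` of the SICMR system at the boundary equilibrium `E₁`,
and satisfies `λ₃ = (μ(p−m−d−μ)/(c(ε+I₁)))·(ℛ₀ − 1 − εbc/(aμ))`. Consequently,
if `p < m+d+μ` and `1 < ℛ₀ < 1 + εbc/(aμ)`, or if `p > m+d+μ` and
`ℛ₀ > 1 + εbc/(aμ)`, then `λ₃ > 0` and `E₁` is linearly unstable. -/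
theorem sicmr_boundary_jacobian_eigenvalue
    (α c μ γ p ε a m d q : ℝ)
    (hα : 0 < α) (hc : 0 < c) (hμ : 0 < μ) (hγ : 0 < γ) (hp : 0 < p)
    (hε : 0 < ε) (ha : 0 < a) (hm : 0 < m) (hd : 0 < d) (hq : 0 < q)
    (hpne : p ≠ m + d + μ)
    (R₀ b I₁ lam₃ : ℝ)
    (hR₀ : R₀ = c * α / (μ * (μ + γ)))
    (hR₀gt : R₀ > 1)
    (hb : b = a * (m + d + μ) / (p - m - d - μ))
    (hI₁ : I₁ = μ / c * (R₀ - 1))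
    (hlam₃ : lam₃ = p * I₁ / (ε + I₁) - (m + d + μ))
    (J : Matrix (Fin 5) (Fin 5) ℝ)
    (hJ : J = !![-(c * I₁) - μ, -(μ + γ), 0, 0, 0;
                 c * I₁, 0, -(p * I₁ / (ε + I₁)), 0, 0;
                 0, 0, p * I₁ / (ε + I₁) - (m + d + μ), 0, 0;
                 0, 0, m, -(q + μ), 0;
                 0, γ, 0, q, -μ]) :
    lam₃ ∈ spectrum ℝ J ∧
    lam₃ = μ * (p - m - d - μ) / (c * (ε + I₁)) * (R₀ - 1 - ε * b * c / (a * μ)) ∧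
    (p < m + d + μ → 1 < R₀ → R₀ < 1 + ε * b * c / (a * μ) → 0 < lam₃) ∧
    (p > m + d + μ → R₀ > 1 + ε * b * c / (a * μ) → 0 < lam₃) :=
  sicmr_boundary_jacobian_eigenvalue_general c μ γ p ε a m d q hc hμ hε ha hpne R₀ b I₁ lam₃ hR₀gt
    hb hI₁ hlam₃ J hJ
end

section
/- Let α, c, μ, γ, p, ε, a, m, d, q be positive reals with ℛ₀ = cα/(μ(μ+γ)) > 1, p ≠ m + d + μ, b = a(m+d+μ)/(p−m−d−μ), and I₁ = (μ/c)(ℛ₀ − 1). Then for all C ≥ 0, M ≥ 0, and 0 ≤ I ≤ I₁, the derivative of the Lyapunov function 𝒱₁ = C along the SICMR flow satisfies pCI/(ε + I + aM) − (m + d + μ)C ≤ pCI₁/(ε + I₁) − (m + d + μ)C = (μ(p − m − d − μ)/(c(ε + I₁)))·(ℛ₀ − 1 − εbc/(aμ))·C; in particular this quantity is ≤ 0 whenever (p − m − d − μ)·(ℛ₀ − 1 − εbc/(aμ)) ≤ 0. -/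
/-!
Bounding `I/(ε + I + aM)` first by dropping `aM` and then by the monotonicity of the
saturating incidence `I ↦ I/(ε + I)` gives the inequality. Since `I₁ = (μ/c)(ℛ₀ − 1)` and
`b/a = (m+d+μ)/(p−m−d−μ)`, the bound equals `(p−m−d−μ)/(ε+I₁) · (I₁ − εb/a) · C`, whose
sign is that of `(p−m−d−μ)(ℛ₀ − 1 − εbc/(aμ))`.
-/

theorem div_add_le_div_add_of_le {ε x y : ℝ} (hε : 0 ≤ ε) (hx : 0 < ε + x) (hxy : x ≤ y) :
    x / (ε + x) ≤ y / (ε + y) := by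
  rw [div_le_div_iff₀ hx (by linarith)]
  nlinarith [mul_le_mul_of_nonneg_left hxy hε]

theorem saturating_incidence_le {p C ε a M I J : ℝ} (hp : 0 ≤ p) (hC : 0 ≤ C) (hε : 0 < ε)
    (ha : 0 ≤ a) (hM : 0 ≤ M) (hI : 0 ≤ I) (hIJ : I ≤ J) :
    p * C * I / (ε + I + a * M) ≤ p * C * J / (ε + J) :=
  calc p * C * I / (ε + I + a * M)
      ≤ p * C * I / (ε + I) :=
        div_le_div_of_nonneg_left (by positivity) (by positivity)
          (le_add_of_nonneg_right (mul_nonneg ha hM))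
    _ = p * C * (I / (ε + I)) := mul_div_assoc _ _ _
    _ ≤ p * C * (J / (ε + J)) :=
        mul_le_mul_of_nonneg_left (div_add_le_div_add_of_le hε.le (by linarith) hIJ)
          (by positivity)
    _ = p * C * J / (ε + J) := (mul_div_assoc _ _ _).symm

theorem mul_div_add_sub_mul_eq {p k C ε I : ℝ} (hpk : p ≠ k) (hεI : ε + I ≠ 0) :
    p * C * I / (ε + I) - k * C = (p - k) / (ε + I) * (I - ε * (k / (p - k))) * C := by
  have hpk' : p - k ≠ 0 := sub_ne_zero.mpr hpk
  field_simp
  ring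

theorem sicmr_lyapunov_V1_general
    (c μ p ε a m d : ℝ)
    (hc : 0 < c) (hμ : 0 < μ) (hp : 0 < p)
    (hε : 0 < ε) (ha : 0 < a)
    (hpne : p ≠ m + d + μ)
    (R₀ b I₁ : ℝ)
    (hb : b = a * (m + d + μ) / (p - m - d - μ))
    (hI₁ : I₁ = μ / c * (R₀ - 1))
    (C M I : ℝ) (hC : 0 ≤ C) (hM : 0 ≤ M) (hI0 : 0 ≤ I) (hI1 : I ≤ I₁) :
    p * C * I / (ε + I + a * M) - (m + d + μ) * C ≤
      p * C * I₁ / (ε + I₁) - (m + d + μ) * C ∧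
    p * C * I₁ / (ε + I₁) - (m + d + μ) * C =
      μ * (p - m - d - μ) / (c * (ε + I₁)) * (R₀ - 1 - ε * b * c / (a * μ)) * C ∧
    ((p - m - d - μ) * (R₀ - 1 - ε * b * c / (a * μ)) ≤ 0 →
      p * C * I / (ε + I + a * M) - (m + d + μ) * C ≤ 0) := by
  have hεI₁ : 0 < ε + I₁ := by linarith
  have hbound := saturating_incidence_le hp.le hC hε ha.le hM hI0 hI1
  have hformula : p * C * I₁ / (ε + I₁) - (m + d + μ) * C =
      μ * (p - m - d - μ) / (c * (ε + I₁)) * (R₀ - 1 - ε * b * c / (a * μ)) * C := by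
    have hpk : p - m - d - μ ≠ 0 := by
      contrapose! hpne
      linarith
    have hthreshold : μ / c * (R₀ - 1 - ε * b * c / (a * μ)) =
        I₁ - ε * ((m + d + μ) / (p - (m + d + μ))) := by
      rw [hI₁, hb, ← sub_sub, ← sub_sub]
      field_simp
    rw [mul_div_add_sub_mul_eq hpne hεI₁.ne', ← hthreshold]
    field_simp
    ring
  refine ⟨by linarith, hformula, fun hsign => ?_⟩
  have hfactor : μ * (p - m - d - μ) / (c * (ε + I₁)) * (R₀ - 1 - ε * b * c / (a * μ)) * C =
      μ / (c * (ε + I₁)) * ((p - m - d - μ) * (R₀ - 1 - ε * b * c / (a * μ))) * C := by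
    ring
  have hnonpos := mul_nonpos_of_nonpos_of_nonneg
    (mul_nonpos_of_nonneg_of_nonpos (by positivity : 0 ≤ μ / (c * (ε + I₁))) hsign) hC
  linarith

/-- For `C, M ≥ 0` and `0 ≤ I ≤ I₁ = (μ/c)(ℛ₀−1)`, the
derivative of the Lyapunov function `𝒱₁ = C` along the SICMR flow satisfies
`pCI/(ε+I+aM) − (m+d+μ)C ≤ pCI₁/(ε+I₁) − (m+d+μ)C
  = (μ(p−m−d−μ)/(c(ε+I₁)))·(ℛ₀ − 1 − εbc/(aμ))·C`,
and this is `≤ 0` whenever `(p−m−d−μ)·(ℛ₀ − 1 − εbc/(aμ)) ≤ 0`. -/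
theorem sicmr_lyapunov_V1
    (α c μ γ p ε a m d q : ℝ)
    (hα : 0 < α) (hc : 0 < c) (hμ : 0 < μ) (hγ : 0 < γ) (hp : 0 < p)
    (hε : 0 < ε) (ha : 0 < a) (hm : 0 < m) (hd : 0 < d) (hq : 0 < q)
    (hpne : p ≠ m + d + μ)
    (R₀ b I₁ : ℝ)
    (hR₀ : R₀ = c * α / (μ * (μ + γ)))
    (hR₀gt : R₀ > 1)
    (hb : b = a * (m + d + μ) / (p - m - d - μ))
    (hI₁ : I₁ = μ / c * (R₀ - 1))
    (C M I : ℝ) (hC : 0 ≤ C) (hM : 0 ≤ M) (hI0 : 0 ≤ I) (hI1 : I ≤ I₁) :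
    p * C * I / (ε + I + a * M) - (m + d + μ) * C ≤
      p * C * I₁ / (ε + I₁) - (m + d + μ) * C ∧
    p * C * I₁ / (ε + I₁) - (m + d + μ) * C =
      μ * (p - m - d - μ) / (c * (ε + I₁)) * (R₀ - 1 - ε * b * c / (a * μ)) * C ∧
    ((p - m - d - μ) * (R₀ - 1 - ε * b * c / (a * μ)) ≤ 0 →
      p * C * I / (ε + I + a * M) - (m + d + μ) * C ≤ 0) :=
  sicmr_lyapunov_V1_general c μ p ε a m d hc hμ hp hε ha hpne R₀ b I₁ hb hI₁ C M I hC hM hI0 hI1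
end

section
/- Let α, c, μ, γ, p, m, d, q be positive reals and set ℛ₀ = cα/(μ(μ+γ)). For the simplified SICMR system (with mass-action testing term pCI): (i) E₀ = (α/μ, 0, 0, 0, 0) is always an equilibrium; (ii) if ℛ₀ > 1, E₁ = ((μ+γ)/c, (μ/c)(ℛ₀−1), 0, 0, (γ/c)(ℛ₀−1)) is the unique equilibrium with I > 0 and C = M = 0; (iii) if ℛ₀ > 1 + c(m+d+μ)/(μp), there is a unique interior equilibrium E* = (S*, I*, C*, M*, R*) with I* = (m+d+μ)/p, S* = α/(cI* + μ), C* = (μ(μ+γ)/(p(cI* + μ)))·(ℛ₀ − 1 − c(m+d+μ)/(μp)), M* = mC*/(q+μ), R* = (qM* + γI*)/μ, all positive; and moreover I* < I₁ = (μ/c)(ℛ₀ − 1). -/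
/-!
Away from `I = 0` the equilibrium equations become triangular: the `I`-equation says
`c S = p C + γ + μ` and the `C`-equation says `C = 0` or `p I = m + d + μ`. In either branch each
remaining equation is linear in one new unknown, so an equilibrium of that branch is unique, and
the explicit points are checked to be equilibria. The interior point has `C* > 0` exactly when
`I* = (m + d + μ) / p` lies below the infective level `I₁` of the boundary equilibrium, which is
the threshold `ℛ₀ > 1 + c (m + d + μ) / (μ p)`.
-/

/-- A point `(S, I, C, M, R)` is an equilibrium of the simplified SICMR system
(with mass-action testing term `pCI`) iff all five right-hand sides vanish. -/
def simplifiedSicmrEquilibrium (α c μ γ p m d q S I C M R : ℝ) : Prop :=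
  α - c * S * I - μ * S = 0 ∧
  c * S * I - p * C * I - γ * I - μ * I = 0 ∧
  p * C * I - (m + d + μ) * C = 0 ∧
  m * C - (q + μ) * M = 0 ∧
  q * M + γ * I - μ * R = 0

namespace SimplifiedSicmr

variable {α c μ γ p m d q R₀ S I C M R S' I' C' M' R' : ℝ}

theorem equilibrium_iff_of_ne_zero (hI : I ≠ 0) :
    simplifiedSicmrEquilibrium α c μ γ p m d q S I C M R ↔
      S * (c * I + μ) = α ∧ c * S = p * C + γ + μ ∧ (C = 0 ∨ p * I = m + d + μ) ∧
        (q + μ) * M = m * C ∧ μ * R = q * M + γ * I := by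
  have hIeq : c * S * I - p * C * I - γ * I - μ * I = 0 ↔ c * S = p * C + γ + μ := by
    rw [show c * S * I - p * C * I - γ * I - μ * I = I * (c * S - (p * C + γ + μ)) by ring,
      mul_eq_zero, sub_eq_zero, or_iff_right hI]
  have hCeq : p * C * I - (m + d + μ) * C = 0 ↔ C = 0 ∨ p * I = m + d + μ := by
    rw [show p * C * I - (m + d + μ) * C = C * (p * I - (m + d + μ)) by ring,
      mul_eq_zero, sub_eq_zero]
  rw [simplifiedSicmrEquilibrium, hIeq, hCeq]
  constructor <;> rintro ⟨e₁, e₂, e₃, e₄, e₅⟩ <;>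
    exact ⟨by linear_combination -e₁, e₂, e₃, by linear_combination -e₄, by linear_combination -e₅⟩

theorem equilibrium_diseaseFree (hμ : μ ≠ 0) :
    simplifiedSicmrEquilibrium α c μ γ p m d q (α / μ) 0 0 0 0 := by
  refine ⟨?_, by ring, by ring, by ring, by ring⟩
  field_simp
  ring

theorem equilibrium_boundary (hc : c ≠ 0) (hR₀ : c * α = R₀ * (μ * (μ + γ))) :
    simplifiedSicmrEquilibrium α c μ γ p m d q
      ((μ + γ) / c) (μ / c * (R₀ - 1)) 0 0 (γ / c * (R₀ - 1)) := by
  refine ⟨?_, ?_, by ring, by ring, ?_⟩ <;> field_simp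
  · linear_combination hR₀
  · ring
  · ring

theorem eq_of_boundary_equilibrium (hα : α ≠ 0) (hc : c ≠ 0) (hμ : μ ≠ 0)
    (hI : I ≠ 0) (hI' : I' ≠ 0)
    (h : simplifiedSicmrEquilibrium α c μ γ p m d q S I 0 0 R)
    (h' : simplifiedSicmrEquilibrium α c μ γ p m d q S' I' 0 0 R') :
    (S, I, (0 : ℝ), (0 : ℝ), R) = (S', I', 0, 0, R') := by
  obtain ⟨hS, hcS, -, -, hR⟩ := (equilibrium_iff_of_ne_zero hI).1 h
  obtain ⟨hS', hcS', -, -, hR'⟩ := (equilibrium_iff_of_ne_zero hI').1 h'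
  obtain rfl : S = S' := mul_left_cancel₀ hc (hcS.trans hcS'.symm)
  have hS0 : S ≠ 0 := by
    rintro rfl
    exact hα (by rw [← hS, zero_mul])
  obtain rfl : I = I' :=
    mul_left_cancel₀ hc (add_right_cancel (mul_left_cancel₀ hS0 (hS.trans hS'.symm)))
  obtain rfl : R = R' := mul_left_cancel₀ hμ (hR.trans hR'.symm)
  rfl

theorem eq_of_interior_equilibrium (hα : α ≠ 0) (hp : p ≠ 0) (hμ : μ ≠ 0) (hqμ : q + μ ≠ 0)
    (hI : I ≠ 0) (hC : C ≠ 0) (hI' : I' ≠ 0) (hC' : C' ≠ 0)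
    (h : simplifiedSicmrEquilibrium α c μ γ p m d q S I C M R)
    (h' : simplifiedSicmrEquilibrium α c μ γ p m d q S' I' C' M' R') :
    (S, I, C, M, R) = (S', I', C', M', R') := by
  obtain ⟨hS, hcS, hpI, hM, hR⟩ := (equilibrium_iff_of_ne_zero hI).1 h
  obtain ⟨hS', hcS', hpI', hM', hR'⟩ := (equilibrium_iff_of_ne_zero hI').1 h'
  obtain rfl : I = I' :=
    mul_left_cancel₀ hp ((hpI.resolve_left hC).trans (hpI'.resolve_left hC').symm)
  have hden : c * I + μ ≠ 0 := by
    intro h0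
    exact hα (by rw [← hS, h0, mul_zero])
  obtain rfl : S = S' := mul_right_cancel₀ hden (hS.trans hS'.symm)
  obtain rfl : C = C' := mul_left_cancel₀ hp (by linarith)
  obtain rfl : M = M' := mul_left_cancel₀ hqμ (hM.trans hM'.symm)
  obtain rfl : R = R' := mul_left_cancel₀ hμ (hR.trans hR'.symm)
  rfl

-- The `I`-equation `c S* = p C* + γ + μ` at the interior point, with `I* = K / p`.
theorem c_mul_interiorS (hR₀ : c * α = R₀ * (μ * (μ + γ))) (hμ : μ ≠ 0) (hp : p ≠ 0) {K : ℝ}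
    (hden : c * (K / p) + μ ≠ 0) :
    c * (α / (c * (K / p) + μ)) =
      p * (μ * (μ + γ) / (p * (c * (K / p) + μ)) * (R₀ - 1 - c * K / (μ * p))) + γ + μ := by
  rw [show c * K / (μ * p) = (c * (K / p) + μ - μ) / μ by field_simp; ring]
  generalize c * (K / p) + μ = D at hden ⊢
  field_simp
  linear_combination hR₀

theorem div_lt_boundaryI_iff (hc : 0 < c) (hμ : 0 < μ) (hp : 0 < p) {K : ℝ} :
    K / p < μ / c * (R₀ - 1) ↔ 1 + c * K / (μ * p) < R₀ := by
  rw [← lt_sub_iff_add_lt', show c * K / (μ * p) = c / μ * (K / p) by field_simp,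
    ← lt_div_iff₀' (by positivity), div_div_eq_mul_div, mul_comm, mul_div_assoc]

end SimplifiedSicmr

open SimplifiedSicmr in
/-- Equilibria of the simplified SICMR system: (i) `E₀` is
always an equilibrium; (ii) for `ℛ₀ > 1`, `E₁` is the unique equilibrium with
`I > 0` and `C = M = 0`; (iii) for `ℛ₀ > 1 + c(m+d+μ)/(μp)` there is a unique
interior equilibrium `E*`, given by the displayed formulas, with `I* < I₁`. -/
theorem simplified_sicmr_equilibria
    (α c μ γ p m d q : ℝ)
    (hα : 0 < α) (hc : 0 < c) (hμ : 0 < μ) (hγ : 0 < γ) (hp : 0 < p)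
    (hm : 0 < m) (hd : 0 < d) (hq : 0 < q)
    (R₀ : ℝ) (hR₀ : R₀ = c * α / (μ * (μ + γ))) :
    simplifiedSicmrEquilibrium α c μ γ p m d q (α / μ) 0 0 0 0 ∧
    (R₀ > 1 →
      simplifiedSicmrEquilibrium α c μ γ p m d q
        ((μ + γ) / c) (μ / c * (R₀ - 1)) 0 0 (γ / c * (R₀ - 1)) ∧
      ∀ S I C M R : ℝ, I > 0 → C = 0 → M = 0 →
        simplifiedSicmrEquilibrium α c μ γ p m d q S I C M R →
        (S, I, C, M, R) =
          ((μ + γ) / c, μ / c * (R₀ - 1), 0, 0, γ / c * (R₀ - 1))) ∧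
    (R₀ > 1 + c * (m + d + μ) / (μ * p) →
      ∃ Sstar Istar Cstar Mstar Rstar : ℝ,
        Istar = (m + d + μ) / p ∧
        Sstar = α / (c * Istar + μ) ∧
        Cstar = μ * (μ + γ) / (p * (c * Istar + μ)) *
          (R₀ - 1 - c * (m + d + μ) / (μ * p)) ∧
        Mstar = m * Cstar / (q + μ) ∧
        Rstar = (q * Mstar + γ * Istar) / μ ∧
        0 < Sstar ∧ 0 < Istar ∧ 0 < Cstar ∧ 0 < Mstar ∧ 0 < Rstar ∧
        simplifiedSicmrEquilibrium α c μ γ p m d q Sstar Istar Cstar Mstar Rstar ∧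
        (∀ S I C M R : ℝ, 0 < S → 0 < I → 0 < C → 0 < M → 0 < R →
          simplifiedSicmrEquilibrium α c μ γ p m d q S I C M R →
          (S, I, C, M, R) = (Sstar, Istar, Cstar, Mstar, Rstar)) ∧
        Istar < μ / c * (R₀ - 1)) := by
  have hR₀' : c * α = R₀ * (μ * (μ + γ)) := by rw [hR₀]; field_simp
  refine ⟨equilibrium_diseaseFree hμ.ne', fun hR₀_gt => ?_, fun hthr => ?_⟩
  · have hI₁ : 0 < μ / c * (R₀ - 1) := mul_pos (div_pos hμ hc) (sub_pos.2 hR₀_gt)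
    refine ⟨equilibrium_boundary hc.ne' hR₀', fun S I C M R hI hC hM h => ?_⟩
    subst hC hM
    exact eq_of_boundary_equilibrium hα.ne' hc.ne' hμ.ne' hI.ne' hI₁.ne' h
      (equilibrium_boundary hc.ne' hR₀')
  · refine ⟨_, _, _, _, _, rfl, rfl, rfl, rfl, rfl, ?_⟩
    have hIs : 0 < (m + d + μ) / p := by positivity
    have hCs : 0 < μ * (μ + γ) / (p * (c * ((m + d + μ) / p) + μ)) *
        (R₀ - 1 - c * (m + d + μ) / (μ * p)) := mul_pos (by positivity) (by linarith)
    have hMs : 0 < m * _ / (q + μ) := div_pos (mul_pos hm hCs) (by positivity)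
    have hE : simplifiedSicmrEquilibrium α c μ γ p m d q _ _ _ _ ((q * _ + γ * _) / μ) :=
      (equilibrium_iff_of_ne_zero hIs.ne').2 ⟨div_mul_cancel₀ _ (by positivity),
        c_mul_interiorS hR₀' hμ.ne' hp.ne' (by positivity), Or.inr (mul_div_cancel₀ _ hp.ne'),
        mul_div_cancel₀ _ (by positivity), mul_div_cancel₀ _ hμ.ne'⟩
    refine ⟨by positivity, hIs, hCs, hMs, by positivity, hE,
      fun S I C M R _ hI hC _ _ h => ?_, (div_lt_boundaryI_iff hc hμ hp).2 hthr⟩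
    exact eq_of_interior_equilibrium hα.ne' hp.ne' hμ.ne' (by positivity) hI.ne' hC.ne'
      hIs.ne' hCs.ne' h hE
end

section
/- Let α, c, μ, γ, p, m, d, q be positive reals with ℛ₀ = cα/(μ(μ+γ)) > 1 + c(m+d+μ)/(μp). Then the interior equilibrium E* = (S*, I*, C*, M*, R*) of the simplified SICMR system, with I* = (m+d+μ)/p, S* = α/(cI* + μ), C* = (μ(μ+γ)/(p(cI* + μ)))·(ℛ₀ − 1 − c(m+d+μ)/(μp)), M* = mC*/(q+μ), R* = (qM* + γI*)/μ, is globally asymptotically stable in the interior of Ω: every solution with initial value in the interior of Ω = {(S, I, C, M, R) ∈ ℝ₊^5 : S + I + C + M + R ≤ α/μ} (all coordinates strictly positive, sum < α/μ) converges to E* as t → ∞. -/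
/-!
Every compartment stays positive and the total population stays below `α / μ`: each equation
has the form `x' = u - g x` with `u ≥ 0`, so `x · exp (∫ g)` is nondecreasing. The
`(S, I, C)`-subsystem is closed, and along it the Volterra-type Lyapunov function
`V = Σ (X - X* log X)` satisfies `V' = -(μ + c I*) (S - S*)² / S ≤ 0`, so `V` converges.
Since the trajectory stays in a compact box, every continuous function of it is uniformly
continuous in time, and Barbalat's lemma gives successively `S → S*` (from `V`),
`S' → 0` (from `S`) and `(log I)' = c S - p C - γ - μ → 0` (from `log I`); the equilibrium
relations turn these into `I → I*` and `C → C*`. Finally `M` and `R` solve stable linear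
equations with convergent forcing.
-/

open Filter Set Topology

theorem monotoneOn_Ici_of_hasDerivAt_nonneg {f f' : ℝ → ℝ} {a : ℝ}
    (hf : ∀ t, a ≤ t → HasDerivAt f (f' t) t) (hf' : ∀ t, a < t → 0 ≤ f' t) :
    MonotoneOn f (Ici a) :=
  monotoneOn_of_hasDerivWithinAt_nonneg (convex_Ici a)
    (fun t ht => (hf t ht).continuousAt.continuousWithinAt)
    (fun t ht => (hf t (le_of_lt (by simpa using ht))).hasDerivWithinAt)
    (fun t ht => hf' t (by simpa using ht))

theorem antitoneOn_Ici_of_hasDerivAt_nonpos {f f' : ℝ → ℝ} {a : ℝ}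
    (hf : ∀ t, a ≤ t → HasDerivAt f (f' t) t) (hf' : ∀ t, a < t → f' t ≤ 0) :
    AntitoneOn f (Ici a) :=
  antitoneOn_of_hasDerivWithinAt_nonpos (convex_Ici a)
    (fun t ht => (hf t ht).continuousAt.continuousWithinAt)
    (fun t ht => (hf t (le_of_lt (by simpa using ht))).hasDerivWithinAt)
    (fun t ht => hf' t (by simpa using ht))

theorem pos_of_hasDerivAt_sub_mul {x u g : ℝ → ℝ} (hg : ContinuousOn g (Ici 0))
    (hx : ∀ t, 0 ≤ t → HasDerivAt x (u t - g t * x t) t) (hu : ∀ t, 0 ≤ t → 0 ≤ u t)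
    (h0 : 0 < x 0) {t : ℝ} (ht : 0 ≤ t) : 0 < x t := by
  -- `g ∘ max · 0` is continuous on `ℝ`, so it has a primitive `G` with `G' = g` on `[0, ∞)`.
  set G : ℝ → ℝ := fun t => ∫ s in (0 : ℝ)..t, g (max s 0)
  have hG : ∀ t, 0 ≤ t → HasDerivAt G (g t) t := fun t ht => by
    simpa [max_eq_left ht] using ((hg.comp_continuous (continuous_id.max continuous_const)
      fun s => le_max_right s 0).integral_hasStrictDerivAt 0 t).hasDerivAt
  have hmono : MonotoneOn (fun t => x t * Real.exp (G t)) (Ici 0) :=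
    monotoneOn_Ici_of_hasDerivAt_nonneg
      (fun t ht => ((hx t ht).mul (hG t ht).exp).congr_deriv (by ring))
      (fun t ht => mul_nonneg (hu t ht.le) (Real.exp_pos _).le)
  have hx0 := hmono self_mem_Ici ht ht
  simp only [G, intervalIntegral.integral_same, Real.exp_zero, mul_one] at hx0
  exact pos_of_mul_pos_left (h0.trans_le hx0) (Real.exp_pos _).le

theorem eventually_lt_of_hasDerivAt_sub_mul {x e : ℝ → ℝ} {a b b' : ℝ} (ha : 0 < a)
    (hbb' : b < b') (hx : ∀ t, 0 ≤ t → HasDerivAt x (e t - a * x t) t)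
    (he : ∀ᶠ t in atTop, e t ≤ a * b) : ∀ᶠ t in atTop, x t < b' := by
  obtain ⟨T, hT⟩ := (he.and (eventually_ge_atTop 0)).exists_forall_of_atTop
  have hanti : AntitoneOn (fun t => (x t - b) * Real.exp (a * t)) (Ici T) :=
    antitoneOn_Ici_of_hasDerivAt_nonpos (f' := fun t => (e t - a * b) * Real.exp (a * t))
      (fun t ht => (((hx t ((hT T le_rfl).2.trans ht)).sub_const b).mul
        ((hasDerivAt_id t).const_mul a).exp).congr_deriv (by simp only [id]; ring))
      (fun t ht => mul_nonpos_of_nonpos_of_nonneg (by linarith [(hT t ht.le).1])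
        (Real.exp_pos _).le)
  have hdecay : Tendsto (fun t => (x T - b) * Real.exp (a * T) * Real.exp (-(a * t)))
      atTop (𝓝 0) := by
    simpa using (Real.tendsto_exp_neg_atTop_nhds_zero.comp
      (tendsto_id.const_mul_atTop ha)).const_mul ((x T - b) * Real.exp (a * T))
  filter_upwards [hdecay.eventually (gt_mem_nhds (sub_pos.2 hbb')), eventually_ge_atTop T]
    with t hsmall htT
  have hxt : (x t - b) * Real.exp (a * t) * Real.exp (-(a * t)) = x t - b := by
    rw [mul_assoc, ← Real.exp_add, add_neg_cancel, Real.exp_zero, mul_one]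
  have hle := mul_le_mul_of_nonneg_right (hanti self_mem_Ici htT htT) (Real.exp_pos (-(a * t))).le
  linarith

theorem tendsto_of_hasDerivAt_sub_mul {x e : ℝ → ℝ} {a L : ℝ} (ha : 0 < a)
    (hx : ∀ t, 0 ≤ t → HasDerivAt x (e t - a * x t) t) (he : Tendsto e atTop (𝓝 (a * L))) :
    Tendsto x atTop (𝓝 L) := by
  refine tendsto_order.2 ⟨fun b' hb' => ?_, fun b' hb' => ?_⟩
  · have hneg : ∀ t, 0 ≤ t → HasDerivAt (-x) (-e t - a * (-x) t) t :=
      fun t ht => (hx t ht).neg.congr_deriv (by simp only [Pi.neg_apply]; ring)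
    have hmid : a * ((L + b') / 2) < a * L := mul_lt_mul_of_pos_left (by linarith) ha
    have he' : ∀ᶠ t in atTop, -e t ≤ a * -((L + b') / 2) :=
      (he.eventually (lt_mem_nhds hmid)).mono fun t ht => by linarith
    simpa using
      eventually_lt_of_hasDerivAt_sub_mul ha (by linarith : -((L + b') / 2) < -b') hneg he'
  · exact eventually_lt_of_hasDerivAt_sub_mul ha (by linarith : (L + b') / 2 < b') hx
      ((he.eventually (gt_mem_nhds (mul_lt_mul_of_pos_left (by linarith) ha))).mono
        fun t ht => ht.le)

theorem exists_tendsto_of_hasDerivAt_nonpos {V V' : ℝ → ℝ} {b : ℝ}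
    (hV : ∀ t, 0 ≤ t → HasDerivAt V (V' t) t) (hV' : ∀ t, 0 ≤ t → V' t ≤ 0)
    (hb : ∀ t, 0 ≤ t → b ≤ V t) : ∃ l, Tendsto V atTop (𝓝 l) := by
  have hanti := antitoneOn_Ici_of_hasDerivAt_nonpos hV fun t ht => hV' t ht.le
  have hext : Antitone fun t => V (max t 0) := fun s t hst =>
    hanti (le_max_right s 0) (le_max_right t 0) (max_le_max_right 0 hst)
  refine ⟨_, (tendsto_atTop_ciInf hext ⟨b, ?_⟩).congr' ?_⟩
  · rintro _ ⟨t, rfl⟩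
    exact hb _ (le_max_right t 0)
  · filter_upwards [eventually_ge_atTop 0] with t ht
    rw [max_eq_left ht]

/-- Barbalat's lemma. The slopes of `Φ` over windows of a fixed length tend to `0`; uniform
continuity transfers this from the mean-value points of the windows to every time. -/
theorem tendsto_zero_of_abs_le_abs_deriv {Φ f w : ℝ → ℝ} {l : ℝ}
    (hΦ : ∀ t, 0 ≤ t → HasDerivAt Φ (f t) t) (hl : Tendsto Φ atTop (𝓝 l))
    (hw : UniformContinuousOn w (Ici 0)) (hwf : ∀ t, 0 ≤ t → |w t| ≤ |f t|) :
    Tendsto w atTop (𝓝 0) := by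
  rw [Metric.tendsto_atTop]
  intro ε hε
  obtain ⟨δ, hδ, hwδ⟩ := Metric.uniformContinuousOn_iff.1 hw (ε / 2) (half_pos hε)
  have hcauchy : ∀ᶠ t in atTop, |Φ (t + δ / 2) - Φ t| < δ / 2 * (ε / 2) := by
    have := (hl.comp (tendsto_atTop_add_const_right _ (δ / 2) tendsto_id)).sub hl
    rw [sub_self] at this
    simpa using this.eventually (Metric.ball_mem_nhds 0 (by positivity))
  obtain ⟨T, hT⟩ := (hcauchy.and (eventually_ge_atTop 0)).exists_forall_of_atTop
  refine ⟨T, fun t ht => ?_⟩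
  have ht0 : 0 ≤ t := (hT t ht).2
  obtain ⟨ξ, hξ, hfξ⟩ := exists_hasDerivAt_eq_slope Φ f (by linarith : t < t + δ / 2)
    (fun s hs => (hΦ s (ht0.trans hs.1)).continuousAt.continuousWithinAt)
    (fun s hs => hΦ s (ht0.trans hs.1.le))
  have hwξ : |w ξ| < ε / 2 :=
    calc |w ξ| ≤ |f ξ| := hwf ξ (ht0.trans hξ.1.le)
      _ = |Φ (t + δ / 2) - Φ t| / (δ / 2) := by
        rw [hfξ, abs_div, add_sub_cancel_left, abs_of_pos (half_pos hδ)]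
      _ < ε / 2 := by rw [div_lt_iff₀ (half_pos hδ)]; linarith [(hT t ht).1]
  have hdist : dist (w t) (w ξ) < ε / 2 := hwδ t ht0 ξ (ht0.trans hξ.1.le) <| by
    rw [Real.dist_eq, abs_lt]; constructor <;> linarith [hξ.1, hξ.2]
  rw [Real.dist_eq] at hdist
  rw [Real.dist_eq, sub_zero]
  linarith [abs_sub_abs_le_abs_sub (w t) (w ξ)]

theorem uniformContinuousOn_comp_of_hasDerivAt_of_mapsTo {E F : Type*}
    [NormedAddCommGroup E] [NormedSpace ℝ E] [UniformSpace F]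
    {X : ℝ → E} {v : E → E} {K : Set E} (hK : IsCompact K) (hv : ContinuousOn v K)
    (hX : ∀ t, 0 ≤ t → HasDerivAt X (v (X t)) t) (hXK : ∀ t, 0 ≤ t → X t ∈ K)
    {G : E → F} (hG : ContinuousOn G K) : UniformContinuousOn (G ∘ X) (Ici 0) := by
  obtain ⟨C, hC⟩ := hK.exists_bound_of_continuousOn hv
  have hlip : LipschitzOnWith C.toNNReal X (Ici 0) :=
    (convex_Ici 0).lipschitzOnWith_of_nnnorm_hasDerivWithin_le
      (fun t ht => (hX t ht).hasDerivWithinAt)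
      (fun t ht => by rw [← norm_toNNReal]; exact Real.toNNReal_le_toNNReal (hC _ (hXK t ht)))
  exact (hK.uniformContinuousOn_of_continuous hG).comp hlip.uniformContinuousOn hXK

noncomputable def volterra (a x : ℝ) : ℝ := x - a * Real.log x

theorem volterra_self_le {a x : ℝ} (ha : 0 < a) (hx : 0 < x) : volterra a a ≤ volterra a x := by
  have h := mul_le_mul_of_nonneg_left (Real.log_le_sub_one_of_pos (div_pos hx ha)) ha.le
  rw [Real.log_div hx.ne' ha.ne', mul_sub, mul_sub, mul_div_cancel₀ _ ha.ne'] at h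
  unfold volterra
  linarith

theorem HasDerivAt.volterra {a x' t : ℝ} {x : ℝ → ℝ} (hx : HasDerivAt x x' t)
    (h : x t ≠ 0) :
    HasDerivAt (fun t => volterra a (x t)) ((1 - a / x t) * x') t :=
  (hx.sub ((hx.log h).const_mul a)).congr_deriv (by field_simp)

theorem sic_lyapunov_identity {α c μ γ p m d Sstar Istar Cstar s i x : ℝ}
    (hs : s ≠ 0) (hi : i ≠ 0) (hx : x ≠ 0)
    (hSeq : c * Sstar * Istar + μ * Sstar = α) (hIeq : c * Sstar = p * Cstar + γ + μ)
    (hCeq : p * Istar = m + d + μ) :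
    (1 - Sstar / s) * (α - c * s * i - μ * s)
      + (1 - Istar / i) * (c * s * i - p * x * i - γ * i - μ * i)
      + (1 - Cstar / x) * (p * x * i - m * x - d * x - μ * x)
      = -((μ + c * Istar) * (s - Sstar) ^ 2 / s) := by
  subst hSeq
  obtain rfl : γ = c * Sstar - p * Cstar - μ := by linarith
  obtain rfl : m = p * Istar - d - μ := by linarith
  field_simp
  ring

theorem sicmr_pos_and_sum_lt {α c μ γ p m d q : ℝ} {S I C M R : ℝ → ℝ}
    (hα : 0 ≤ α) (hμ : μ ≠ 0) (hγ : 0 ≤ γ) (hm : 0 ≤ m) (hd : 0 ≤ d) (hq : 0 ≤ q)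
    (hS : ∀ t, 0 ≤ t → HasDerivAt S (α - c * S t * I t - μ * S t) t)
    (hI : ∀ t, 0 ≤ t → HasDerivAt I (c * S t * I t - p * C t * I t - γ * I t - μ * I t) t)
    (hC : ∀ t, 0 ≤ t → HasDerivAt C (p * C t * I t - m * C t - d * C t - μ * C t) t)
    (hM : ∀ t, 0 ≤ t → HasDerivAt M (m * C t - q * M t - μ * M t) t)
    (hR : ∀ t, 0 ≤ t → HasDerivAt R (q * M t + γ * I t - μ * R t) t)
    (h0 : 0 < S 0 ∧ 0 < I 0 ∧ 0 < C 0 ∧ 0 < M 0 ∧ 0 < R 0 ∧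
      S 0 + I 0 + C 0 + M 0 + R 0 < α / μ) {t : ℝ} (ht : 0 ≤ t) :
    0 < S t ∧ 0 < I t ∧ 0 < C t ∧ 0 < M t ∧ 0 < R t ∧
      S t + I t + C t + M t + R t < α / μ := by
  obtain ⟨hS0, hI0, hC0, hM0, hR0, hN0⟩ := h0
  have hcont : ∀ {x x' : ℝ → ℝ}, (∀ t, 0 ≤ t → HasDerivAt x (x' t) t) →
      ContinuousOn x (Ici 0) :=
    fun hx t ht => (hx t ht).continuousAt.continuousWithinAt
  have hSc := hcont hS
  have hIc := hcont hI
  have hCc := hcont hC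
  have hIpos : ∀ t, 0 ≤ t → 0 < I t := fun t ht =>
    pos_of_hasDerivAt_sub_mul (u := 0) (g := fun t => -(c * S t - p * C t - γ - μ))
      (by fun_prop) (fun t ht => (hI t ht).congr_deriv (by simp only [Pi.zero_apply]; ring))
      (fun _ _ => le_rfl) hI0 ht
  have hCpos : ∀ t, 0 ≤ t → 0 < C t := fun t ht =>
    pos_of_hasDerivAt_sub_mul (u := 0) (g := fun t => -(p * I t - m - d - μ))
      (by fun_prop) (fun t ht => (hC t ht).congr_deriv (by simp only [Pi.zero_apply]; ring))
      (fun _ _ => le_rfl) hC0 ht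
  have hSpos : ∀ t, 0 ≤ t → 0 < S t := fun t ht =>
    pos_of_hasDerivAt_sub_mul (u := fun _ => α) (g := fun t => c * I t + μ)
      (by fun_prop) (fun t ht => (hS t ht).congr_deriv (by ring)) (fun _ _ => hα) hS0 ht
  have hMpos : ∀ t, 0 ≤ t → 0 < M t := fun t ht =>
    pos_of_hasDerivAt_sub_mul (u := fun t => m * C t) (g := fun _ => q + μ)
      continuousOn_const (fun t ht => (hM t ht).congr_deriv (by ring))
      (fun t ht => mul_nonneg hm (hCpos t ht).le) hM0 ht
  have hRpos : ∀ t, 0 ≤ t → 0 < R t := fun t ht =>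
    pos_of_hasDerivAt_sub_mul (u := fun t => q * M t + γ * I t) (g := fun _ => μ)
      continuousOn_const hR
      (fun t ht => add_nonneg (mul_nonneg hq (hMpos t ht).le) (mul_nonneg hγ (hIpos t ht).le))
      hR0 ht
  -- `N = S + I + C + M + R` satisfies `N' = α - μ N - d C`.
  have hgap : 0 < α / μ - (S t + I t + C t + M t + R t) :=
    pos_of_hasDerivAt_sub_mul (x := fun t => α / μ - (S t + I t + C t + M t + R t))
      (u := fun t => d * C t) (g := fun _ => μ) continuousOn_const
      (fun t ht => (((((hS t ht).add (hI t ht)).add (hC t ht)).add (hM t ht)).add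
        (hR t ht)).const_sub (α / μ) |>.congr_deriv (by field_simp; ring))
      (fun t ht => mul_nonneg hd (hCpos t ht).le) (sub_pos.2 hN0) ht
  exact ⟨hSpos t ht, hIpos t ht, hCpos t ht, hMpos t ht, hRpos t ht, by linarith⟩

theorem sicmr_equilibrium {α c μ γ p m d R₀ Sstar Istar Cstar : ℝ}
    (hα : 0 < α) (hc : 0 < c) (hμ : 0 < μ) (hγ : 0 < γ) (hp : 0 < p) (hm : 0 < m) (hd : 0 < d)
    (hR₀ : R₀ = c * α / (μ * (μ + γ)))
    (hR₀gt : R₀ > 1 + c * (m + d + μ) / (μ * p))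
    (hIstar : Istar = (m + d + μ) / p)
    (hSstar : Sstar = α / (c * Istar + μ))
    (hCstar : Cstar = μ * (μ + γ) / (p * (c * Istar + μ)) *
      (R₀ - 1 - c * (m + d + μ) / (μ * p))) :
    0 < Sstar ∧ 0 < Istar ∧ 0 < Cstar ∧ c * Sstar * Istar + μ * Sstar = α ∧
      c * Sstar = p * Cstar + γ + μ ∧ p * Istar = m + d + μ := by
  have hI₀ : 0 < Istar := by rw [hIstar]; positivity
  refine ⟨by rw [hSstar]; positivity, hI₀,
    by rw [hCstar]; exact mul_pos (by positivity) (by linarith),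
    by rw [hSstar]; field_simp, ?_, by rw [hIstar]; field_simp⟩
  rw [hSstar, hCstar, hR₀, hIstar]
  field_simp
  ring

theorem sic_uniformContinuousOn_comp {α c μ γ p m d B : ℝ} {S I C : ℝ → ℝ}
    (hS : ∀ t, 0 ≤ t → HasDerivAt S (α - c * S t * I t - μ * S t) t)
    (hI : ∀ t, 0 ≤ t → HasDerivAt I (c * S t * I t - p * C t * I t - γ * I t - μ * I t) t)
    (hC : ∀ t, 0 ≤ t → HasDerivAt C (p * C t * I t - m * C t - d * C t - μ * C t) t)
    (hpos : ∀ t, 0 ≤ t → 0 < S t ∧ 0 < I t ∧ 0 < C t)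
    (hB : ∀ t, 0 ≤ t → S t ≤ B ∧ I t ≤ B ∧ C t ≤ B)
    {G : ℝ × ℝ × ℝ → ℝ} (hG : Continuous G) :
    UniformContinuousOn (fun t => G (S t, I t, C t)) (Ici 0) :=
  uniformContinuousOn_comp_of_hasDerivAt_of_mapsTo
    (isCompact_Icc.prod (isCompact_Icc.prod isCompact_Icc))
    (v := fun z => (α - c * z.1 * z.2.1 - μ * z.1,
      c * z.1 * z.2.1 - p * z.2.2 * z.2.1 - γ * z.2.1 - μ * z.2.1,
      p * z.2.2 * z.2.1 - m * z.2.2 - d * z.2.2 - μ * z.2.2)) (by fun_prop)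
    (fun t ht => (hS t ht).prodMk ((hI t ht).prodMk (hC t ht)))
    (fun t ht => ⟨⟨(hpos t ht).1.le, (hB t ht).1⟩, ⟨(hpos t ht).2.1.le, (hB t ht).2.1⟩,
      ⟨(hpos t ht).2.2.le, (hB t ht).2.2⟩⟩) hG.continuousOn

theorem sic_tendsto_S {α c μ γ p m d Sstar Istar Cstar B : ℝ} {S I C : ℝ → ℝ}
    (hc : 0 < c) (hμ : 0 < μ) (hS₀ : 0 < Sstar) (hI₀ : 0 < Istar) (hC₀ : 0 < Cstar)
    (hSeq : c * Sstar * Istar + μ * Sstar = α) (hIeq : c * Sstar = p * Cstar + γ + μ)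
    (hCeq : p * Istar = m + d + μ)
    (hS : ∀ t, 0 ≤ t → HasDerivAt S (α - c * S t * I t - μ * S t) t)
    (hI : ∀ t, 0 ≤ t → HasDerivAt I (c * S t * I t - p * C t * I t - γ * I t - μ * I t) t)
    (hC : ∀ t, 0 ≤ t → HasDerivAt C (p * C t * I t - m * C t - d * C t - μ * C t) t)
    (hpos : ∀ t, 0 ≤ t → 0 < S t ∧ 0 < I t ∧ 0 < C t) (hSB : ∀ t, 0 ≤ t → S t ≤ B)
    (huc : UniformContinuousOn (fun t => (S t - Sstar) ^ 2) (Ici 0)) :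
    Tendsto S atTop (𝓝 Sstar) := by
  set k := μ + c * Istar
  have hk : 0 < k := by positivity
  have hV : ∀ t, 0 ≤ t → HasDerivAt
      (fun t => volterra Sstar (S t) + volterra Istar (I t) + volterra Cstar (C t))
      (-(k * (S t - Sstar) ^ 2 / S t)) t := fun t ht => by
    obtain ⟨hs, hi, hx⟩ := hpos t ht
    rw [← sic_lyapunov_identity hs.ne' hi.ne' hx.ne' hSeq hIeq hCeq]
    exact (((hS t ht).volterra hs.ne').add ((hI t ht).volterra hi.ne')).add
      ((hC t ht).volterra hx.ne')
  obtain ⟨l, hl⟩ := exists_tendsto_of_hasDerivAt_nonpos hV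
    (fun t ht => neg_nonpos.2 (div_nonneg (by positivity) (hpos t ht).1.le))
    (fun t ht => add_le_add (add_le_add (volterra_self_le hS₀ (hpos t ht).1)
      (volterra_self_le hI₀ (hpos t ht).2.1)) (volterra_self_le hC₀ (hpos t ht).2.2))
  -- `S ≤ B` makes `(S - S*)²` at most `(B / k) |V'|`.
  have hsq : Tendsto (fun t => (S t - Sstar) ^ 2) atTop (𝓝 0) :=
    tendsto_zero_of_abs_le_abs_deriv (fun t ht => (hV t ht).const_mul (B / k))
      (hl.const_mul (B / k)) huc fun t ht => by
        have hs := (hpos t ht).1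
        have hB0 : 0 < B := hs.trans_le (hSB t ht)
        rw [show B / k * -(k * (S t - Sstar) ^ 2 / S t) = -(B * (S t - Sstar) ^ 2 / S t) by
          field_simp, abs_neg, abs_of_nonneg (sq_nonneg _), abs_of_nonneg (by positivity),
          le_div_iff₀ hs, mul_comm]
        exact mul_le_mul_of_nonneg_right (hSB t ht) (sq_nonneg _)
  rw [tendsto_iff_norm_sub_tendsto_zero]
  simpa [Real.sqrt_sq_eq_abs] using hsq.sqrt

theorem tendsto_I_of_tendsto_S {α c μ Sstar Istar : ℝ} {S I : ℝ → ℝ}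
    (hc : c ≠ 0) (hS₀ : Sstar ≠ 0) (hSeq : c * Sstar * Istar + μ * Sstar = α)
    (hS : ∀ t, 0 ≤ t → HasDerivAt S (α - c * S t * I t - μ * S t) t)
    (hStend : Tendsto S atTop (𝓝 Sstar))
    (huc : UniformContinuousOn (fun t => α - c * S t * I t - μ * S t) (Ici 0)) :
    Tendsto I atTop (𝓝 Istar) := by
  have hS' := tendsto_zero_of_abs_le_abs_deriv hS hStend huc fun _ _ => le_rfl
  have := (((tendsto_const_nhds (x := α)).sub (hStend.const_mul μ)).sub hS').div
    (hStend.const_mul c) (mul_ne_zero hc hS₀)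
  rw [show (α - μ * Sstar - 0) / (c * Sstar) = Istar by field_simp; linarith] at this
  refine this.congr' ?_
  filter_upwards [hStend.eventually_ne hS₀] with t ht
  rw [Pi.div_apply]
  field_simp
  ring

theorem tendsto_C_of_tendsto_S_I {c μ γ p Sstar Istar Cstar : ℝ} {S I C : ℝ → ℝ}
    (hp : p ≠ 0) (hI₀ : Istar ≠ 0) (hIeq : c * Sstar = p * Cstar + γ + μ)
    (hI : ∀ t, 0 ≤ t → HasDerivAt I (c * S t * I t - p * C t * I t - γ * I t - μ * I t) t)
    (hIpos : ∀ t, 0 ≤ t → I t ≠ 0)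
    (hStend : Tendsto S atTop (𝓝 Sstar)) (hItend : Tendsto I atTop (𝓝 Istar))
    (huc : UniformContinuousOn (fun t => c * S t - p * C t - γ - μ) (Ici 0)) :
    Tendsto C atTop (𝓝 Cstar) := by
  have hlogI : ∀ t, 0 ≤ t →
      HasDerivAt (fun t => Real.log (I t)) (c * S t - p * C t - γ - μ) t := fun t ht =>
    ((hI t ht).log (hIpos t ht)).congr_deriv (by field_simp [hIpos t ht])
  have hrate := tendsto_zero_of_abs_le_abs_deriv hlogI (hItend.log hI₀) huc fun _ _ => le_rfl
  have := ((((hStend.const_mul c).sub_const γ).sub_const μ).sub hrate).div_const p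
  rw [show (c * Sstar - γ - μ - 0) / p = Cstar by field_simp; linarith] at this
  refine this.congr fun t => ?_
  field_simp
  ring

theorem sic_tendsto {α c μ γ p m d Sstar Istar Cstar B : ℝ} {S I C : ℝ → ℝ}
    (hc : 0 < c) (hμ : 0 < μ) (hp : 0 < p)
    (hS₀ : 0 < Sstar) (hI₀ : 0 < Istar) (hC₀ : 0 < Cstar)
    (hSeq : c * Sstar * Istar + μ * Sstar = α) (hIeq : c * Sstar = p * Cstar + γ + μ)
    (hCeq : p * Istar = m + d + μ)
    (hS : ∀ t, 0 ≤ t → HasDerivAt S (α - c * S t * I t - μ * S t) t)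
    (hI : ∀ t, 0 ≤ t → HasDerivAt I (c * S t * I t - p * C t * I t - γ * I t - μ * I t) t)
    (hC : ∀ t, 0 ≤ t → HasDerivAt C (p * C t * I t - m * C t - d * C t - μ * C t) t)
    (hpos : ∀ t, 0 ≤ t → 0 < S t ∧ 0 < I t ∧ 0 < C t)
    (hB : ∀ t, 0 ≤ t → S t ≤ B ∧ I t ≤ B ∧ C t ≤ B) :
    Tendsto S atTop (𝓝 Sstar) ∧ Tendsto I atTop (𝓝 Istar) ∧
      Tendsto C atTop (𝓝 Cstar) := by
  have huc := fun {G} (hG : Continuous G) => sic_uniformContinuousOn_comp hS hI hC hpos hB hG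
  have hStend := sic_tendsto_S hc hμ hS₀ hI₀ hC₀ hSeq hIeq hCeq hS hI hC hpos
    (fun t ht => (hB t ht).1) (huc (G := fun z => (z.1 - Sstar) ^ 2) (by fun_prop))
  have hItend := tendsto_I_of_tendsto_S hc.ne' hS₀.ne' hSeq hS hStend
    (huc (G := fun z => α - c * z.1 * z.2.1 - μ * z.1) (by fun_prop))
  exact ⟨hStend, hItend, tendsto_C_of_tendsto_S_I hp.ne' hI₀.ne' hIeq hI
    (fun t ht => (hpos t ht).2.1.ne') hStend hItend
    (huc (G := fun z => c * z.1 - p * z.2.2 - γ - μ) (by fun_prop))⟩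

/-- If `ℛ₀ > 1 + c(m+d+μ)/(μp)`, the interior equilibrium
`E* = (S*, I*, C*, M*, R*)` of the simplified SICMR system is globally
asymptotically stable in the interior of `Ω`: every solution whose initial
value has all coordinates strictly positive and sum `< α/μ` converges to `E*`
as `t → ∞`. -/
theorem simplified_sicmr_interior_globally_stable
    (α c μ γ p m d q : ℝ)
    (hα : 0 < α) (hc : 0 < c) (hμ : 0 < μ) (hγ : 0 < γ) (hp : 0 < p)
    (hm : 0 < m) (hd : 0 < d) (hq : 0 < q)
    (R₀ Sstar Istar Cstar Mstar Rstar : ℝ)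
    (hR₀ : R₀ = c * α / (μ * (μ + γ)))
    (hR₀gt : R₀ > 1 + c * (m + d + μ) / (μ * p))
    (hIstar : Istar = (m + d + μ) / p)
    (hSstar : Sstar = α / (c * Istar + μ))
    (hCstar : Cstar = μ * (μ + γ) / (p * (c * Istar + μ)) *
      (R₀ - 1 - c * (m + d + μ) / (μ * p)))
    (hMstar : Mstar = m * Cstar / (q + μ))
    (hRstar : Rstar = (q * Mstar + γ * Istar) / μ)
    (S I C M R : ℝ → ℝ)
    (hS : ∀ t, 0 ≤ t → HasDerivAt S (α - c * S t * I t - μ * S t) t)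
    (hI : ∀ t, 0 ≤ t → HasDerivAt I
      (c * S t * I t - p * C t * I t - γ * I t - μ * I t) t)
    (hC : ∀ t, 0 ≤ t → HasDerivAt C
      (p * C t * I t - m * C t - d * C t - μ * C t) t)
    (hM : ∀ t, 0 ≤ t → HasDerivAt M (m * C t - q * M t - μ * M t) t)
    (hR : ∀ t, 0 ≤ t → HasDerivAt R (q * M t + γ * I t - μ * R t) t)
    (h0 : 0 < S 0 ∧ 0 < I 0 ∧ 0 < C 0 ∧ 0 < M 0 ∧ 0 < R 0 ∧
      S 0 + I 0 + C 0 + M 0 + R 0 < α / μ) :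
    Tendsto (fun t => (S t, I t, C t, M t, R t)) atTop
      (nhds (Sstar, Istar, Cstar, Mstar, Rstar)) := by
  obtain ⟨hS₀, hI₀, hC₀, hSeq, hIeq, hCeq⟩ :=
    sicmr_equilibrium hα hc hμ hγ hp hm hd hR₀ hR₀gt hIstar hSstar hCstar
  have hinv := fun t (ht : 0 ≤ t) =>
    sicmr_pos_and_sum_lt hα.le hμ.ne' hγ.le hm.le hd.le hq.le hS hI hC hM hR h0 ht
  obtain ⟨hStend, hItend, hCtend⟩ :=
    sic_tendsto hc hμ hp hS₀ hI₀ hC₀ hSeq hIeq hCeq hS hI hC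
      (fun t ht => ⟨(hinv t ht).1, (hinv t ht).2.1, (hinv t ht).2.2.1⟩)
      fun t ht => by
        obtain ⟨_, _, _, _, _, _⟩ := hinv t ht
        refine ⟨?_, ?_, ?_⟩ <;> linarith
  have hMtend : Tendsto M atTop (𝓝 Mstar) :=
    tendsto_of_hasDerivAt_sub_mul (e := fun t => m * C t) (a := q + μ) (by positivity)
      (fun t ht => (hM t ht).congr_deriv (by ring))
      (by convert hCtend.const_mul m using 2; rw [hMstar]; field_simp)
  have hRtend : Tendsto R atTop (𝓝 Rstar) :=
    tendsto_of_hasDerivAt_sub_mul (e := fun t => q * M t + γ * I t) hμ hR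
      (by convert (hMtend.const_mul q).add (hItend.const_mul γ) using 2; rw [hRstar]; field_simp)
  exact hStend.prodMk_nhds (hItend.prodMk_nhds (hCtend.prodMk_nhds (hMtend.prodMk_nhds hRtend)))
end

section
/- Let α, c, μ, γ, p, m, d, q be positive reals and let S*, I*, C* > 0 satisfy the interior-equilibrium relations of the simplified SICMR system: α = cS*I* + μS*, γ + μ = cS* − pC*, and m + d + μ = pI*. Then for all S ≥ 0, I > 0, C > 0, the derivative of the Lyapunov function 𝒱₂ = (1/2)(S − S*)² + S*(I − I* − I*·ln(I/I*) + C − C* − C*·ln(C/C*)) along the simplified SICMR flow satisfies (S − S*)(α − cSI − μS) + S*·((I − I*)/I)·(cSI − pCI − (γ+μ)I) + S*·((C − C*)/C)·(pCI − (m+d+μ)C) ≤ 0, with equality only when S = S*. -/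
/-! By the equilibrium relations the `I`- and `C`-terms become `S*(I - I*)(c(S - S*) - p(C - C*))`
and `pS*(C - C*)(I - I*)`. Their `p`-parts cancel, and the remaining `cS*(S - S*)(I - I*)` cancels
the cross term of the `S`-term `-(S - S*)(μ(S - S*) + c(SI - S*I*))`, leaving `-(μ + cI)(S - S*)²`. -/

lemma sicmr_lyapunov_deriv_eq {α c μ γ p m d Sstar Istar Cstar S I C : ℝ}
    (h1 : α = c * Sstar * Istar + μ * Sstar)
    (h2 : γ + μ = c * Sstar - p * Cstar)
    (h3 : m + d + μ = p * Istar)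
    (hI : I ≠ 0) (hC : C ≠ 0) :
    (S - Sstar) * (α - c * S * I - μ * S) +
      Sstar * ((I - Istar) / I) * (c * S * I - p * C * I - (γ + μ) * I) +
      Sstar * ((C - Cstar) / C) * (p * C * I - (m + d + μ) * C) =
      -((μ + c * I) * (S - Sstar) ^ 2) := by
  rw [h1, h2, h3]
  field_simp
  ring

lemma neg_mul_sq_sub_nonpos_and_eq_zero_imp {k a b : ℝ} (hk : 0 < k) :
    -(k * (a - b) ^ 2) ≤ 0 ∧ (-(k * (a - b) ^ 2) = 0 → a = b) := by
  refine ⟨neg_nonpos.mpr (by positivity), fun h => ?_⟩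
  have hsq : (a - b) ^ 2 = 0 := (mul_eq_zero.mp (neg_eq_zero.mp h)).resolve_left hk.ne'
  exact sub_eq_zero.mp (pow_eq_zero_iff two_ne_zero |>.mp hsq)

theorem simplified_sicmr_lyapunov_V2_general
    (α c μ γ p m d : ℝ)
    (hc : 0 < c) (hμ : 0 < μ)
    (Sstar Istar Cstar : ℝ)
    (h1 : α = c * Sstar * Istar + μ * Sstar)
    (h2 : γ + μ = c * Sstar - p * Cstar)
    (h3 : m + d + μ = p * Istar)
    (S I C : ℝ) (hI : 0 < I) (hC : 0 < C) :
    (S - Sstar) * (α - c * S * I - μ * S) +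
      Sstar * ((I - Istar) / I) * (c * S * I - p * C * I - (γ + μ) * I) +
      Sstar * ((C - Cstar) / C) * (p * C * I - (m + d + μ) * C) ≤ 0 ∧
    ((S - Sstar) * (α - c * S * I - μ * S) +
      Sstar * ((I - Istar) / I) * (c * S * I - p * C * I - (γ + μ) * I) +
      Sstar * ((C - Cstar) / C) * (p * C * I - (m + d + μ) * C) = 0 →
      S = Sstar) := by
  rw [sicmr_lyapunov_deriv_eq h1 h2 h3 hI.ne' hC.ne']
  exact neg_mul_sq_sub_nonpos_and_eq_zero_imp (by positivity)

/-- For the simplified SICMR system with interior-equilibrium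
relations `α = cS*I* + μS*`, `γ + μ = cS* − pC*`, `m + d + μ = pI*`, the
derivative of the Volterra-type Lyapunov function
`𝒱₂ = ½(S−S*)² + S*(I − I* − I*ln(I/I*) + C − C* − C*ln(C/C*))`
along the flow, namely
`(S−S*)(α − cSI − μS) + S*((I−I*)/I)(cSI − pCI − (γ+μ)I)
  + S*((C−C*)/C)(pCI − (m+d+μ)C)`,
is `≤ 0` for all `S ≥ 0`, `I > 0`, `C > 0`, with equality only when `S = S*`. -/
theorem simplified_sicmr_lyapunov_V2
    (α c μ γ p m d q : ℝ)
    (hα : 0 < α) (hc : 0 < c) (hμ : 0 < μ) (hγ : 0 < γ) (hp : 0 < p)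
    (hm : 0 < m) (hd : 0 < d) (hq : 0 < q)
    (Sstar Istar Cstar : ℝ)
    (hSstar : 0 < Sstar) (hIstar : 0 < Istar) (hCstar : 0 < Cstar)
    (h1 : α = c * Sstar * Istar + μ * Sstar)
    (h2 : γ + μ = c * Sstar - p * Cstar)
    (h3 : m + d + μ = p * Istar)
    (S I C : ℝ) (hS : 0 ≤ S) (hI : 0 < I) (hC : 0 < C) :
    (S - Sstar) * (α - c * S * I - μ * S) +
      Sstar * ((I - Istar) / I) * (c * S * I - p * C * I - (γ + μ) * I) +
      Sstar * ((C - Cstar) / C) * (p * C * I - (m + d + μ) * C) ≤ 0 ∧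
    ((S - Sstar) * (α - c * S * I - μ * S) +
      Sstar * ((I - Istar) / I) * (c * S * I - p * C * I - (γ + μ) * I) +
      Sstar * ((C - Cstar) / C) * (p * C * I - (m + d + μ) * C) = 0 →
      S = Sstar) :=
  simplified_sicmr_lyapunov_V2_general α c μ γ p m d hc hμ Sstar Istar Cstar h1 h2 h3 S I C hI hC
end
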